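/- arXiv:math/0601742 — 4 statements merged into one kernel-verified Lean document; each statement's English description precedes it below -/
import Mathlib

section
/- Let X = (X_t)_{t≥1} be a sequence of real-valued square-integrable random variables on a probability space (Ω, F, P) that is weakly stationary in the sense that for all k ≥ 0 and n ≥ 1, Var(∑_{t=k+1}^{k+n} X_t) = Var(∑_{t=1}^{n} X_t). Suppose there exist d ∈ [0, 1/2) and C > 0 such that Var(∑_{t=1}^n X_t) / n^{1+2d} → C as n → ∞. Then the lag-1 correlation of aggregated blocks converges: Corr(∑_{t=1}^n X_t, ∑_{t=n+1}^{2n} X_t) → 2^{2d} − 1 as n → ∞. -/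
open MeasureTheory Filter

/-- Covariance of two real random variables under a measure. -/
noncomputable def covar {Ω : Type*} [MeasurableSpace Ω] (μ : Measure Ω) (S T : Ω → ℝ) : ℝ :=
  ∫ x, (S x - ∫ y, S y ∂μ) * (T x - ∫ y, T y ∂μ) ∂μ

/-- Variance of a real random variable under a measure. -/
noncomputable def varr {Ω : Type*} [MeasurableSpace Ω] (μ : Measure Ω) (S : Ω → ℝ) : ℝ :=
  covar μ S S

/-- Correlation of two real random variables under a measure. -/
noncomputable def corr {Ω : Type*} [MeasurableSpace Ω] (μ : Measure Ω) (S T : Ω → ℝ) : ℝ :=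
  covar μ S T / (Real.sqrt (varr μ S) * Real.sqrt (varr μ T))

lemma varr_nonneg {Ω : Type*} [MeasurableSpace Ω] (μ : Measure Ω) (S : Ω → ℝ) :
    0 ≤ varr μ S :=
  integral_nonneg fun x => mul_self_nonneg _

lemma varr_add {Ω : Type*} [MeasurableSpace Ω] (μ : Measure Ω) [IsProbabilityMeasure μ]
    {S T : Ω → ℝ} (hS : MemLp S 2 μ) (hT : MemLp T 2 μ) :
    varr μ (fun x => S x + T x) = varr μ S + 2 * covar μ S T + varr μ T := by
  have hSi : Integrable S μ := hS.integrable one_le_two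
  have hTi : Integrable T μ := hT.integrable one_le_two
  set mS := ∫ y, S y ∂μ with hmS
  set mT := ∫ y, T y ∂μ with hmT
  have ha : MemLp (fun x => S x - mS) 2 μ := hS.sub (memLp_const mS)
  have hb : MemLp (fun x => T x - mT) 2 μ := hT.sub (memLp_const mT)
  have ha2 : Integrable (fun x => (S x - mS) * (S x - mS)) μ := by
    have := ha.integrable_sq
    simpa [sq] using this
  have hb2 : Integrable (fun x => (T x - mT) * (T x - mT)) μ := by
    have := hb.integrable_sq
    simpa [sq] using this
  have hab : Integrable (fun x => (S x - mS) * (T x - mT)) μ := by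
    have h1 : Integrable (fun x => ((S x - mS) + (T x - mT))^2) μ := by
      have := (ha.add hb).integrable_sq
      simpa using this
    have key : (fun x => (S x - mS) * (T x - mT))
        = fun x => (((S x - mS) + (T x - mT))^2 - (S x - mS)^2 - (T x - mT)^2)/2 := by
      funext x; ring
    rw [key]
    exact (((h1.sub (by simpa [sq] using ha2)).sub (by simpa [sq] using hb2)).div_const 2)
  have hint : ∫ x, (S x + T x) ∂μ = mS + mT := integral_add hSi hTi
  have hAB : Integrable (fun x => (S x - mS) * (S x - mS)
      + 2 * ((S x - mS) * (T x - mT))) μ := ha2.add (hab.const_mul 2)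
  unfold varr covar
  rw [← hmS, ← hmT, hint]
  have key : (fun x => (S x + T x - (mS + mT)) * (S x + T x - (mS + mT)))
      = fun x => (S x - mS) * (S x - mS) + 2 * ((S x - mS) * (T x - mT))
          + (T x - mT) * (T x - mT) := by
    funext x; ring
  rw [key, integral_add hAB hb2, integral_add ha2 (hab.const_mul 2), integral_const_mul]


/-- Aggregated lag-1 autocorrelation converges to `2^(2d) - 1`. -/
theorem aggregated_corr_tendsto
    {Ω : Type*} [MeasurableSpace Ω] (μ : Measure Ω) [IsProbabilityMeasure μ]
    (X : ℕ → Ω → ℝ) (hX : ∀ t, MemLp (X t) 2 μ)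
    (d C : ℝ) (hd0 : 0 ≤ d) (hd1 : d < 1/2) (hC : 0 < C)
    (hstat : ∀ k n : ℕ, 1 ≤ n →
      varr μ (fun x => ∑ t ∈ Finset.Icc (k+1) (k+n), X t x)
        = varr μ (fun x => ∑ t ∈ Finset.Icc 1 n, X t x))
    (hvar : Tendsto
      (fun n : ℕ => varr μ (fun x => ∑ t ∈ Finset.Icc 1 n, X t x) / (n : ℝ) ^ (1 + 2*d))
      atTop (nhds C)) :
    Tendsto
      (fun n : ℕ => corr μ (fun x => ∑ t ∈ Finset.Icc 1 n, X t x)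
        (fun x => ∑ t ∈ Finset.Icc (n+1) (n+n), X t x))
      atTop (nhds ((2:ℝ) ^ (2*d) - 1)) := by
  set p : ℝ := 1 + 2*d with hp
  have hp0 : 0 < p := by rw [hp]; linarith
  set V : ℕ → ℝ := fun n => varr μ (fun x => ∑ t ∈ Finset.Icc 1 n, X t x) with hV
  have hmem : ∀ a b : ℕ, MemLp (fun x => ∑ t ∈ Finset.Icc a b, X t x) 2 μ := fun a b =>
    memLp_finset_sum _ (fun i _ => hX i)
  -- covariance formula
  have hcov : ∀ n : ℕ, 1 ≤ n →
      covar μ (fun x => ∑ t ∈ Finset.Icc 1 n, X t x)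
        (fun x => ∑ t ∈ Finset.Icc (n+1) (n+n), X t x) = (V (n+n) - 2 * V n) / 2 := by
    intro n hn
    have hsum : (fun x => (∑ t ∈ Finset.Icc 1 n, X t x)
        + ∑ t ∈ Finset.Icc (n+1) (n+n), X t x)
        = fun x => ∑ t ∈ Finset.Icc 1 (n+n), X t x := by
      funext x
      rw [show (1:ℕ) = 0 + 1 from rfl, Finset.Icc_add_one_left_eq_Ioc, Finset.Icc_add_one_left_eq_Ioc, show n + (0 + 1) = n + 1 from rfl, Finset.Icc_add_one_left_eq_Ioc]
      exact Finset.sum_Ioc_consecutive _ (Nat.zero_le n) (Nat.le_add_right n n)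
    have hva := varr_add μ (hmem 1 n) (hmem (n+1) (n+n))
    rw [hsum] at hva
    have hT : varr μ (fun x => ∑ t ∈ Finset.Icc (n+1) (n+n), X t x) = V n := hstat n n hn
    rw [hT] at hva
    have : V (n+n) = V n + 2 * covar μ (fun x => ∑ t ∈ Finset.Icc 1 n, X t x)
        (fun x => ∑ t ∈ Finset.Icc (n+1) (n+n), X t x) + V n := hva
    linarith
  -- eventual positivity of variance
  have hevpos : ∀ᶠ n : ℕ in atTop, 0 < V n := by
    filter_upwards [hvar.eventually (eventually_gt_nhds hC), eventually_ge_atTop 1]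
      with n h1 h2
    have hnp : (0:ℝ) < (n:ℝ) ^ p :=
      Real.rpow_pos_of_pos (by exact_mod_cast Nat.lt_of_lt_of_le Nat.zero_lt_one h2) p
    have := mul_pos h1 hnp
    rwa [div_mul_cancel₀] at this
    exact ne_of_gt hnp
  -- limit of the doubled-block variance ratio
  have hdouble : Tendsto (fun n : ℕ => V (n+n) / (n:ℝ) ^ p) atTop
      (nhds (C * (2:ℝ) ^ p)) := by
    have hnn : Tendsto (fun n : ℕ => n + n) atTop atTop :=
      tendsto_atTop_mono (fun n => Nat.le_add_right n n) tendsto_id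
    have hcomp : Tendsto (fun n : ℕ => V (n+n) / ((n+n : ℕ):ℝ) ^ p) atTop (nhds C) :=
      hvar.comp hnn
    have := hcomp.mul_const ((2:ℝ) ^ p)
    apply this.congr'
    filter_upwards [eventually_ge_atTop 1] with n hn
    have hn0 : (0:ℝ) < (n:ℝ) := by exact_mod_cast Nat.lt_of_lt_of_le Nat.zero_lt_one hn
    have hcast : ((n+n : ℕ):ℝ) = 2 * (n:ℝ) := by push_cast; ring
    rw [hcast, Real.mul_rpow (by norm_num) (le_of_lt hn0)]
    have h2p : (0:ℝ) < (2:ℝ) ^ p := Real.rpow_pos_of_pos (by norm_num) p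
    have hnp : (0:ℝ) < (n:ℝ) ^ p := Real.rpow_pos_of_pos hn0 p
    field_simp
  -- algebraic limit
  have hmain : Tendsto (fun n : ℕ =>
      (V (n+n) / (n:ℝ) ^ p - 2 * (V n / (n:ℝ) ^ p)) / (2 * (V n / (n:ℝ) ^ p)))
      atTop (nhds ((C * (2:ℝ) ^ p - 2 * C) / (2 * C))) :=
    (hdouble.sub (hvar.const_mul 2)).div (hvar.const_mul 2) (by positivity)
  have hval : (C * (2:ℝ) ^ p - 2 * C) / (2 * C) = (2:ℝ) ^ (2*d) - 1 := by
    rw [hp, Real.rpow_add (by norm_num : (0:ℝ) < 2), Real.rpow_one]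
    field_simp
  rw [← hval]
  apply hmain.congr'
  filter_upwards [hevpos, eventually_ge_atTop 1] with n hVpos hn
  have hn0 : (0:ℝ) < (n:ℝ) := by exact_mod_cast Nat.lt_of_lt_of_le Nat.zero_lt_one hn
  have hnp : (0:ℝ) < (n:ℝ) ^ p := Real.rpow_pos_of_pos hn0 p
  have hcorr : corr μ (fun x => ∑ t ∈ Finset.Icc 1 n, X t x)
      (fun x => ∑ t ∈ Finset.Icc (n+1) (n+n), X t x)
      = ((V (n+n) - 2 * V n) / 2) / V n := by
    unfold corr
    rw [hcov n hn, hstat n n hn, Real.mul_self_sqrt (varr_nonneg μ _)]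
  rw [hcorr]
  field_simp
end

section
/- Let d ∈ (0, 1/2) and let r : ℕ → ℝ satisfy r_s · s^{1−2d} → K as s → ∞ for some constant K > 0. Let M be an integer with M > 2, and let G be a tree on the vertex set {1, …, M} (i.e., a connected simple graph with M vertices and M − 1 edges). Then there exists a constant A > 0 such that for all n ≥ 1, the M-fold sum ∑_{k_1=1}^{n} … ∑_{k_M=1}^{n} ∏_{{i,j} ∈ E(G)} |exp(r_{|k_i − k_j|}) − 1| ≤ A · n^{2d(M−1)+1}, where E(G) denotes the edge set of G and the product has M − 1 factors. -/
open Filter Finset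
open Fin.NatCast


lemma aux_rpow_step {p : ℝ} (hp0 : 0 < p) (hp1 : p ≤ 1) {x : ℝ} (hx : 1 ≤ x) :
    p * x ^ (p - 1) ≤ x ^ p - (x - 1) ^ p := by
  have hx0 : 0 < x := lt_of_lt_of_le one_pos hx
  have ht0 : 0 ≤ (x - 1) / x := div_nonneg (by linarith) hx0.le
  have key : ((x-1)/x) ^ p * 1 ^ (1 - p) ≤ p * ((x-1)/x) + (1 - p) * 1 :=
    Real.geom_mean_le_arith_mean2_weighted hp0.le (by linarith) ht0 zero_le_one (by ring)
  rw [Real.one_rpow, mul_one, mul_one] at key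
  rw [Real.div_rpow (by linarith) hx0.le] at key
  have hxp : (0:ℝ) < x ^ p := Real.rpow_pos_of_pos hx0 p
  have hE : x * x ^ (p - 1) = x ^ p := by
    rw [← Real.rpow_one_add' hx0.le (by intro h; nlinarith), add_sub_cancel]
  rw [div_le_iff₀ hxp] at key
  have hEA : (p * ((x-1)/x) + (1 - p)) * x ^ p = p * (x-1) * x^(p-1) + (1-p)*x^p := by
    rw [← hE]; field_simp
  have h2 : p * (x-1) * x^(p-1) = p * x^p - p * x^(p-1) := by rw [← hE]; ring
  linarith

lemma sum_rpow_le {p : ℝ} (hp0 : 0 < p) (hp1 : p ≤ 1) (n : ℕ) :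
    ∑ s ∈ Finset.Icc 1 n, (s:ℝ) ^ (p - 1) ≤ (n:ℝ) ^ p / p := by
  have tele : ∑ i ∈ Finset.range n, (((i+1:ℕ):ℝ)^p - ((i:ℕ):ℝ)^p) = ((n:ℕ):ℝ)^p - ((0:ℕ):ℝ)^p :=
    Finset.sum_range_sub (fun i => ((i:ℕ):ℝ)^p) n
  rw [show Finset.Icc 1 n = Finset.Ico 1 (n+1) by rfl, Finset.sum_Ico_eq_sum_range]
  simp only [Nat.add_sub_cancel]
  have hb : ∀ i ∈ Finset.range n, ((1+i:ℕ):ℝ) ^ (p-1) ≤ (((i+1:ℕ):ℝ)^p - ((i:ℕ):ℝ)^p) / p := by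
    intro i _
    have h1 : (1:ℝ) ≤ (i:ℝ) + 1 := by linarith [Nat.cast_nonneg (α := ℝ) i]
    have h2 := aux_rpow_step hp0 hp1 h1
    have e : (i:ℝ) + 1 - 1 = (i:ℝ) := by ring
    rw [e] at h2
    rw [le_div_iff₀ hp0]
    push_cast
    rw [add_comm (1:ℝ) (i:ℝ)]
    linarith
  calc ∑ i ∈ Finset.range n, ((1+i:ℕ):ℝ) ^ (p-1)
      ≤ ∑ i ∈ Finset.range n, (((i+1:ℕ):ℝ)^p - ((i:ℕ):ℝ)^p) / p := Finset.sum_le_sum hb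
    _ = (∑ i ∈ Finset.range n, (((i+1:ℕ):ℝ)^p - ((i:ℕ):ℝ)^p)) / p := by rw [Finset.sum_div]
    _ = ((n:ℝ)^p - ((0:ℕ):ℝ)^p) / p := by rw [tele]
    _ ≤ (n:ℝ)^p / p := by
        simp [Real.zero_rpow (ne_of_gt hp0)]

lemma abs_exp_sub_one_le' (x : ℝ) : |Real.exp x - 1| ≤ |x| * Real.exp |x| := by
  rcases le_or_gt 0 x with h | h
  · rw [abs_of_nonneg h, abs_of_nonneg (by linarith [Real.one_le_exp h])]
    have h1 : 1 - x ≤ Real.exp (-x) := by linarith [Real.add_one_le_exp (-x)]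
    have h2 : Real.exp (-x) * Real.exp x = 1 := by rw [← Real.exp_add]; simp
    nlinarith [Real.exp_pos x]
  · rw [abs_of_neg h, abs_of_nonpos (by linarith [Real.exp_lt_one_iff.mpr h] : Real.exp x - 1 ≤ 0)]
    have h1 : x + 1 ≤ Real.exp x := Real.add_one_le_exp x
    nlinarith [Real.one_le_exp (le_of_lt (neg_pos.mpr h)), Real.exp_pos (-x)]

lemma row_bound (d K : ℝ) (hd0 : 0 < d) (hd1 : d < 1/2) (r : ℕ → ℝ)
    (hr : Tendsto (fun s : ℕ => r s * (s : ℝ) ^ (1 - 2*d)) atTop (nhds K)) :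
    ∃ C > 0, ∀ n : ℕ, 1 ≤ n → ∀ j ∈ Finset.Icc 1 n,
      ∑ c ∈ Finset.Icc 1 n, |Real.exp (r (((c:ℤ) - (j:ℤ)).natAbs)) - 1| ≤ C * (n:ℝ) ^ (2*d) := by
  -- bound on |r s| * s^(1-2d)
  obtain ⟨K₀, hK₀⟩ := (hr.abs.bddAbove_range : BddAbove _)
  have habs : ∀ s : ℕ, |r s| * (s:ℝ) ^ (1 - 2*d) ≤ K₀ := by
    intro s
    have : |r s * (s:ℝ) ^ (1 - 2*d)| ≤ K₀ := hK₀ ⟨s, rfl⟩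
    rwa [abs_mul, abs_of_nonneg (Real.rpow_nonneg (Nat.cast_nonneg s) _)] at this
  set K' : ℝ := max K₀ 1 with hK'def
  have hK'1 : (1:ℝ) ≤ K' := le_max_right _ _
  have hK'0 : (0:ℝ) < K' := lt_of_lt_of_le one_pos hK'1
  have hbd : ∀ s : ℕ, 1 ≤ s → |r s| ≤ K' * (s:ℝ) ^ (2*d - 1) := by
    intro s hs
    have hs0 : (0:ℝ) < (s:ℝ) := by exact_mod_cast hs
    have hone : (s:ℝ) ^ (1 - 2*d) * (s:ℝ) ^ (2*d - 1) = 1 := by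
      rw [← Real.rpow_add hs0]; norm_num
    have h1 : |r s| * (s:ℝ) ^ (1 - 2*d) * (s:ℝ)^(2*d-1) ≤ K₀ * (s:ℝ)^(2*d-1) :=
      mul_le_mul_of_nonneg_right (habs s) (Real.rpow_nonneg hs0.le _)
    rw [mul_assoc, hone, mul_one] at h1
    exact h1.trans (mul_le_mul_of_nonneg_right (le_max_left _ _) (Real.rpow_nonneg hs0.le _))
  have hrK : ∀ s : ℕ, 1 ≤ s → |r s| ≤ K' := by
    intro s hs
    refine (hbd s hs).trans ?_
    nth_rewrite 2 [← mul_one K']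
    refine mul_le_mul_of_nonneg_left ?_ hK'0.le
    exact Real.rpow_le_one_of_one_le_of_nonpos (by exact_mod_cast hs) (by linarith)
  set C₀ : ℝ := K' * Real.exp K' with hC₀def
  have hC₀ : 0 < C₀ := mul_pos hK'0 (Real.exp_pos _)
  have hfb : ∀ s : ℕ, 1 ≤ s → |Real.exp (r s) - 1| ≤ C₀ * (s:ℝ) ^ (2*d - 1) := by
    intro s hs
    refine (abs_exp_sub_one_le' (r s)).trans ?_
    have h1 : Real.exp |r s| ≤ Real.exp K' := Real.exp_le_exp.mpr (hrK s hs)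
    calc |r s| * Real.exp |r s| ≤ (K' * (s:ℝ)^(2*d-1)) * Real.exp K' := by
          apply mul_le_mul (hbd s hs) h1 (Real.exp_pos _).le
          positivity
      _ = C₀ * (s:ℝ)^(2*d-1) := by rw [hC₀def]; ring
  set B₀ : ℝ := |Real.exp (r 0) - 1| with hB₀def
  refine ⟨B₀ + C₀ / d, by positivity, ?_⟩
  intro n hn j hj
  rw [Finset.mem_Icc] at hj
  have hSig : ∑ s ∈ Finset.Icc 1 n, (s:ℝ) ^ (2*d - 1) ≤ (n:ℝ)^(2*d) / (2*d) :=
    sum_rpow_le (by linarith) (by linarith) n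
  have hjmem : j ∈ Finset.Icc 1 n := Finset.mem_Icc.mpr hj
  -- split off the diagonal term
  rw [← Finset.sum_erase_add _ _ hjmem]
  have hdiag : |Real.exp (r (((j:ℤ) - (j:ℤ)).natAbs)) - 1| = B₀ := by simp [hB₀def]
  rw [hdiag]
  -- off-diagonal
  have hoff : ∑ c ∈ (Finset.Icc 1 n).erase j, |Real.exp (r (((c:ℤ) - (j:ℤ)).natAbs)) - 1|
      ≤ C₀ * (2 * ((n:ℝ)^(2*d) / (2*d))) := by
    have step1 : ∑ c ∈ (Finset.Icc 1 n).erase j, |Real.exp (r (((c:ℤ) - (j:ℤ)).natAbs)) - 1|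
        ≤ ∑ c ∈ (Finset.Icc 1 n).erase j, C₀ * ((((c:ℤ) - (j:ℤ)).natAbs : ℝ)) ^ (2*d-1) := by
      apply Finset.sum_le_sum
      intro c hc
      have hc' : c ≠ j := Finset.ne_of_mem_erase hc
      have hcm := Finset.mem_of_mem_erase hc
      rw [Finset.mem_Icc] at hcm
      exact hfb _ (by omega)
    refine step1.trans ?_
    rw [← Finset.sum_filter_add_sum_filter_not ((Finset.Icc 1 n).erase j) (fun c => c < j)]
    have hlt : ∑ c ∈ ((Finset.Icc 1 n).erase j).filter (fun c => c < j),
        C₀ * ((((c:ℤ) - (j:ℤ)).natAbs : ℝ)) ^ (2*d-1)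
        ≤ C₀ * ((n:ℝ)^(2*d) / (2*d)) := by
      have e1 : ∀ c ∈ ((Finset.Icc 1 n).erase j).filter (fun c => c < j),
          C₀ * ((((c:ℤ) - (j:ℤ)).natAbs : ℝ)) ^ (2*d-1) = C₀ * (((j - c : ℕ)):ℝ) ^ (2*d-1) := by
        intro c hc
        simp only [Finset.mem_filter] at hc
        congr 3
        omega
      rw [Finset.sum_congr rfl e1]
      have himg : ∑ c ∈ ((Finset.Icc 1 n).erase j).filter (fun c => c < j),
          C₀ * (((j - c : ℕ)):ℝ) ^ (2*d-1)
          = ∑ s ∈ (((Finset.Icc 1 n).erase j).filter (fun c => c < j)).image (fun c => j - c),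
            C₀ * ((s:ℝ)) ^ (2*d-1) := by
        rw [Finset.sum_image]
        intro a ha b hb hab
        simp only [Finset.mem_coe, Finset.mem_filter] at ha hb hab
        omega
      rw [himg]
      have hsub : (((Finset.Icc 1 n).erase j).filter (fun c => c < j)).image (fun c => j - c)
          ⊆ Finset.Icc 1 n := by
        intro s hs
        simp only [Finset.mem_image, Finset.mem_filter, Finset.mem_erase, Finset.mem_Icc] at hs ⊢
        obtain ⟨c, ⟨⟨hne, hc1, hc2⟩, hcj⟩, rfl⟩ := hs
        omega
      calc _ ≤ ∑ s ∈ Finset.Icc 1 n, C₀ * ((s:ℝ)) ^ (2*d-1) := by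
            apply Finset.sum_le_sum_of_subset_of_nonneg hsub
            intro s _ _; positivity
        _ = C₀ * ∑ s ∈ Finset.Icc 1 n, ((s:ℝ)) ^ (2*d-1) := by rw [Finset.mul_sum]
        _ ≤ C₀ * ((n:ℝ)^(2*d) / (2*d)) := mul_le_mul_of_nonneg_left hSig hC₀.le
    have hgt : ∑ c ∈ ((Finset.Icc 1 n).erase j).filter (fun c => ¬ c < j),
        C₀ * ((((c:ℤ) - (j:ℤ)).natAbs : ℝ)) ^ (2*d-1)
        ≤ C₀ * ((n:ℝ)^(2*d) / (2*d)) := by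
      have e1 : ∀ c ∈ ((Finset.Icc 1 n).erase j).filter (fun c => ¬ c < j),
          C₀ * ((((c:ℤ) - (j:ℤ)).natAbs : ℝ)) ^ (2*d-1) = C₀ * (((c - j : ℕ)):ℝ) ^ (2*d-1) := by
        intro c hc
        simp only [Finset.mem_filter] at hc
        congr 3
        omega
      rw [Finset.sum_congr rfl e1]
      have himg : ∑ c ∈ ((Finset.Icc 1 n).erase j).filter (fun c => ¬ c < j),
          C₀ * (((c - j : ℕ)):ℝ) ^ (2*d-1)
          = ∑ s ∈ (((Finset.Icc 1 n).erase j).filter (fun c => ¬ c < j)).image (fun c => c - j),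
            C₀ * ((s:ℝ)) ^ (2*d-1) := by
        rw [Finset.sum_image]
        intro a ha b hb hab
        simp only [Finset.mem_coe, Finset.mem_filter, Finset.mem_erase] at ha hb hab
        omega
      rw [himg]
      have hsub : (((Finset.Icc 1 n).erase j).filter (fun c => ¬ c < j)).image (fun c => c - j)
          ⊆ Finset.Icc 1 n := by
        intro s hs
        simp only [Finset.mem_image, Finset.mem_filter, Finset.mem_erase, Finset.mem_Icc] at hs ⊢
        obtain ⟨c, ⟨⟨hne, hc1, hc2⟩, hcj⟩, rfl⟩ := hs
        omega
      calc _ ≤ ∑ s ∈ Finset.Icc 1 n, C₀ * ((s:ℝ)) ^ (2*d-1) := by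
            apply Finset.sum_le_sum_of_subset_of_nonneg hsub
            intro s _ _; positivity
        _ = C₀ * ∑ s ∈ Finset.Icc 1 n, ((s:ℝ)) ^ (2*d-1) := by rw [Finset.mul_sum]
        _ ≤ C₀ * ((n:ℝ)^(2*d) / (2*d)) := mul_le_mul_of_nonneg_left hSig hC₀.le
    linarith
  have hone_le : (1:ℝ) ≤ (n:ℝ)^(2*d) :=
    Real.one_le_rpow (by exact_mod_cast hn) (by linarith)
  have hB₀ : 0 ≤ B₀ := abs_nonneg _
  have : C₀ * (2 * ((n:ℝ)^(2*d) / (2*d))) = (C₀ / d) * (n:ℝ)^(2*d) := by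
    field_simp
  rw [this] at hoff
  have hfin : B₀ ≤ B₀ * (n:ℝ)^(2*d) := le_mul_of_one_le_right hB₀ hone_le
  calc _ ≤ (C₀ / d) * (n:ℝ)^(2*d) + B₀ := by linarith
    _ ≤ (C₀ / d) * (n:ℝ)^(2*d) + B₀ * (n:ℝ)^(2*d) := by linarith
    _ = (B₀ + C₀ / d) * (n:ℝ)^(2*d) := by ring

lemma sum_piFinset_snoc {m : ℕ} (s : Finset ℕ) (φ : (Fin (m+1) → ℕ) → ℝ) :
    ∑ a ∈ Fintype.piFinset (fun _ : Fin (m+1) => s), φ a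
    = ∑ c ∈ s, ∑ b ∈ Fintype.piFinset (fun _ : Fin m => s), φ (Fin.snoc b c) := by
  rw [← Finset.sum_product']
  apply Finset.sum_bij' (i := fun a _ => ((a (Fin.last m), Fin.init a) : ℕ × (Fin m → ℕ)))
    (j := fun p _ => (Fin.snoc p.2 p.1 : Fin (m+1) → ℕ))
  · intro a ha
    rw [Fintype.mem_piFinset] at ha
    rw [Finset.mem_product]
    refine ⟨ha _, ?_⟩
    rw [Fintype.mem_piFinset]
    intro i; exact ha _
  · intro p hp
    rw [Finset.mem_product] at hp
    rw [Fintype.mem_piFinset]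
    intro i
    refine Fin.lastCases ?_ ?_ i
    · rw [Fin.snoc_last]; exact hp.1
    · intro j; rw [Fin.snoc_castSucc]
      exact (Fintype.mem_piFinset.mp hp.2) j
  · intro a _
    exact Fin.snoc_init_self a
  · intro p _
    simp [Fin.init_snoc, Fin.snoc_last]
  · intro a _
    rw [Fin.snoc_init_self]

lemma pi_sum_bound (f : ℕ → ℝ) (hf : ∀ s, 0 ≤ f s) (n : ℕ) (hn : 1 ≤ n) (S : ℝ)
    (hrow : ∀ j ∈ Finset.Icc 1 n, ∑ c ∈ Finset.Icc 1 n, f (((c:ℤ) - (j:ℤ)).natAbs) ≤ S) :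
    ∀ (m : ℕ) (par : ℕ → ℕ), (∀ t, 1 ≤ t → t ≤ m → par t < t) →
    ∑ a ∈ Fintype.piFinset (fun _ : Fin (m+1) => Finset.Icc 1 n),
      ∏ t ∈ Finset.range m,
        f (((a ((t+1 : ℕ) : Fin (m+1)) : ℤ) - (a ((par (t+1) : ℕ) : Fin (m+1)) : ℤ)).natAbs)
      ≤ (n : ℝ) * S ^ m := by
  have hS : 0 ≤ S := by
    refine le_trans ?_ (hrow 1 (Finset.mem_Icc.mpr ⟨le_refl 1, hn⟩))
    exact Finset.sum_nonneg fun c _ => hf _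
  intro m
  induction m with
  | zero =>
    intro par _
    simp only [Finset.range_zero, Finset.prod_empty, Finset.sum_const, nsmul_eq_mul, mul_one,
      pow_zero]
    rw [Fintype.card_piFinset]
    simp [Nat.card_Icc]
  | succ m ih =>
    intro par hpar
    rw [sum_piFinset_snoc]
    -- cast helper
    have hcast : ∀ i : ℕ, i < m + 1 →
        ((i : Fin (m+2))) = Fin.castSucc ((i : Fin (m+1))) := by
      intro i h
      apply Fin.ext
      rw [Fin.coe_castSucc, Fin.val_cast_of_lt h, Fin.val_cast_of_lt (by omega)]
    have hlast : (((m+1 : ℕ)) : Fin (m+2)) = Fin.last (m+1) := by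
      apply Fin.ext
      rw [Fin.val_cast_of_lt (by omega)]
      rfl
    have hparlt : par (m+1) < m+1 := hpar (m+1) (by omega) (le_refl _)
    -- rewrite each summand
    have hsummand : ∀ c ∈ Finset.Icc 1 n, ∀ b ∈ Fintype.piFinset (fun _ : Fin (m+1) => Finset.Icc 1 n),
        (∏ t ∈ Finset.range (m+1),
          f ((((Fin.snoc b c : Fin (m+2) → ℕ) ((t+1 : ℕ) : Fin (m+2)) : ℤ)
             - ((Fin.snoc b c : Fin (m+2) → ℕ) ((par (t+1) : ℕ) : Fin (m+2)) : ℤ)).natAbs))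
        = (∏ t ∈ Finset.range m,
            f (((b ((t+1 : ℕ) : Fin (m+1)) : ℤ) - (b ((par (t+1) : ℕ) : Fin (m+1)) : ℤ)).natAbs))
          * f (((c : ℤ) - (b ((par (m+1) : ℕ) : Fin (m+1)) : ℤ)).natAbs) := by
      intro c hc b hb
      rw [Finset.prod_range_succ]
      congr 1
      · apply Finset.prod_congr rfl
        intro t ht
        rw [Finset.mem_range] at ht
        have hp1 : par (t+1) < t+1 := hpar (t+1) (by omega) (by omega)
        rw [hcast (t+1) (by omega), hcast (par (t+1)) (by omega),
          Fin.snoc_castSucc, Fin.snoc_castSucc]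
      · rw [hlast, hcast (par (m+1)) hparlt, Fin.snoc_last, Fin.snoc_castSucc]
    calc ∑ c ∈ Finset.Icc 1 n, ∑ b ∈ Fintype.piFinset (fun _ : Fin (m+1) => Finset.Icc 1 n),
          (∏ t ∈ Finset.range (m+1),
            f ((((Fin.snoc b c : Fin (m+2) → ℕ) ((t+1 : ℕ) : Fin (m+2)) : ℤ)
               - ((Fin.snoc b c : Fin (m+2) → ℕ) ((par (t+1) : ℕ) : Fin (m+2)) : ℤ)).natAbs))
        = ∑ b ∈ Fintype.piFinset (fun _ : Fin (m+1) => Finset.Icc 1 n),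
          ∑ c ∈ Finset.Icc 1 n,
          (∏ t ∈ Finset.range m,
            f (((b ((t+1 : ℕ) : Fin (m+1)) : ℤ) - (b ((par (t+1) : ℕ) : Fin (m+1)) : ℤ)).natAbs))
          * f (((c : ℤ) - (b ((par (m+1) : ℕ) : Fin (m+1)) : ℤ)).natAbs) := by
          rw [Finset.sum_comm]
          apply Finset.sum_congr rfl
          intro b hb
          apply Finset.sum_congr rfl
          intro c hc
          exact hsummand c hc b hb
      _ ≤ ∑ b ∈ Fintype.piFinset (fun _ : Fin (m+1) => Finset.Icc 1 n),
          (∏ t ∈ Finset.range m,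
            f (((b ((t+1 : ℕ) : Fin (m+1)) : ℤ) - (b ((par (t+1) : ℕ) : Fin (m+1)) : ℤ)).natAbs)) * S := by
          apply Finset.sum_le_sum
          intro b hb
          rw [← Finset.mul_sum]
          apply mul_le_mul_of_nonneg_left _ (Finset.prod_nonneg fun t _ => hf _)
          apply hrow
          exact Fintype.mem_piFinset.mp hb _
      _ = (∑ b ∈ Fintype.piFinset (fun _ : Fin (m+1) => Finset.Icc 1 n),
          ∏ t ∈ Finset.range m,
            f (((b ((t+1 : ℕ) : Fin (m+1)) : ℤ) - (b ((par (t+1) : ℕ) : Fin (m+1)) : ℤ)).natAbs)) * S := by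
          rw [Finset.sum_mul]
      _ ≤ ((n:ℝ) * S ^ m) * S := by
          apply mul_le_mul_of_nonneg_right _ hS
          exact ih par (fun t h1 h2 => hpar t h1 (by omega))
      _ = (n:ℝ) * S ^ (m+1) := by ring

variable {M : ℕ} (G : SimpleGraph (Fin M))

lemma cross_lemma (l : List (Fin M)) {a b : Fin M} (w : G.Walk a b) :
    a ∈ l → b ∉ l → ∃ x ∈ l, ∃ y, y ∉ l ∧ G.Adj x y := by
  induction w with
  | nil => intro h h'; exact absurd h h'
  | @cons u v t h p ih =>
    intro ha hb
    by_cases hv : v ∈ l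
    · exact ih hv hb
    · exact ⟨u, ha, v, hv, h⟩

lemma exists_good_list (hconn : G.Connected) :
    ∀ j, j ≤ M → ∃ l : List (Fin M), l.length = j ∧ l.Nodup ∧
      ∀ i : ℕ, (hi : i < l.length) → 0 < i →
        ∃ k : ℕ, ∃ hk : k < i, G.Adj (l[i]'hi) (l[k]'(lt_trans hk hi)) := by
  intro j
  induction j with
  | zero => exact fun _ => ⟨[], rfl, List.nodup_nil, fun i hi => by simp at hi⟩
  | succ j ihj =>
    intro hj
    obtain ⟨l, hlen, hnodup, hgood⟩ := ihj (by omega)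
    have hexv : ∃ v : Fin M, v ∉ l := by
      by_contra hall
      push_neg at hall
      have h1 : (Finset.univ : Finset (Fin M)) ⊆ l.toFinset := fun v _ => List.mem_toFinset.mpr (hall v)
      have h2 := Finset.card_le_card h1
      simp only [Finset.card_univ, Fintype.card_fin] at h2
      have h3 := l.toFinset_card_le
      omega
    obtain ⟨v, hv⟩ := hexv
    match l, hlen, hnodup, hgood with
    | [], hlen, _, _ =>
      refine ⟨[v], by simp [← hlen], List.nodup_singleton v, ?_⟩
      intro i hi hpos
      simp only [List.length_singleton] at hi
      omega
    | (h₀ :: t), hlen, hnodup, hgood =>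
      set l := h₀ :: t with hl
      have hh₀ : h₀ ∈ l := List.mem_cons_self
      obtain ⟨w⟩ := (hconn h₀ v : G.Reachable h₀ v)
      obtain ⟨x, hx, y, hy, hxy⟩ := cross_lemma G l w hh₀ hv
      refine ⟨l ++ [y], by simp [← hlen], ?_, ?_⟩
      · rw [List.nodup_append]
        exact ⟨hnodup, List.nodup_singleton y, fun a ha b hb hab => by simp only [List.mem_singleton] at hb; subst hb; subst hab; exact hy ha⟩
      · intro i hi hpos
        rw [List.length_append, List.length_singleton] at hi
        by_cases hil : i < l.length
        · obtain ⟨k, hk, hadj⟩ := hgood i hil hpos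
          refine ⟨k, hk, ?_⟩
          rw [List.getElem_append_left hil, List.getElem_append_left (lt_trans hk hil)]
          exact hadj
        · have hieq : i = l.length := by omega
          obtain ⟨k, hkl, hkx⟩ := List.mem_iff_getElem.mp hx
          refine ⟨k, hieq ▸ hkl, ?_⟩
          have e1 : (l ++ [y])[i]'(by simp only [List.length_append, List.length_singleton]; omega) = y := by
            rw [List.getElem_append_right (by omega)]
            simp [hieq]
          have e2 : (l ++ [y])[k]'(by simp only [List.length_append, List.length_singleton]; omega) = x := by
            rw [List.getElem_append_left hkl]
            exact hkx
          rw [e1, e2]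
          exact hxy.symm

lemma exists_ordering (hconn : G.Connected) (hM : 1 ≤ M) :
    ∃ σ : Fin M → Fin M, Function.Bijective σ ∧
      ∀ t : Fin M, 0 < (t : ℕ) → ∃ s : Fin M, (s : ℕ) < (t : ℕ) ∧ G.Adj (σ t) (σ s) := by
  obtain ⟨l, hlen, hnodup, hgood⟩ := exists_good_list G hconn M le_rfl
  refine ⟨fun t => l[(t : ℕ)]'(by omega), ?_, ?_⟩
  · rw [Fintype.bijective_iff_injective_and_card]
    refine ⟨?_, rfl⟩
    intro t t' h
    have := List.Nodup.getElem_inj_iff hnodup (i := (t:ℕ)) (j := (t':ℕ))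
      (hi := by omega) (hj := by omega)
    exact Fin.ext (this.mp h)
  · intro t ht
    obtain ⟨k, hk, hadj⟩ := hgood (t : ℕ) (by omega) ht
    exact ⟨⟨k, by omega⟩, hk, hadj⟩

/-- Tree-sum bound (Lemma `tree`): for a tree `G` on `M` vertices, the `M`-fold sum of the
product over the edges of `G` of `|e^{r_{|k_i - k_j|}} - 1|` is `O(n^{2d(M-1)+1})`. -/
theorem tree_sum_bound
    (d K : ℝ) (hd0 : 0 < d) (hd1 : d < 1/2) (hK : 0 < K)
    (r : ℕ → ℝ)
    (hr : Tendsto (fun s : ℕ => r s * (s : ℝ) ^ (1 - 2*d)) atTop (nhds K))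
    (M : ℕ) (hM : 2 < M)
    (G : SimpleGraph (Fin M)) [DecidableRel G.Adj]
    (hconn : G.Connected) (hcard : G.edgeFinset.card = M - 1) :
    ∃ A > 0, ∀ n : ℕ, 1 ≤ n →
      ∑ k ∈ Fintype.piFinset (fun _ : Fin M => Finset.Icc 1 n),
        ∏ e ∈ G.edgeFinset,
          Sym2.lift
            ⟨fun i j => |Real.exp (r (((k i : ℤ) - (k j : ℤ)).natAbs)) - 1|,
              fun i j => by dsimp only; rw [show ((k i : ℤ) - (k j : ℤ)).natAbs = ((k j : ℤ) - (k i : ℤ)).natAbs from by rw [← Int.natAbs_neg]; ring_nf]⟩ e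
        ≤ A * (n : ℝ) ^ (2*d*((M : ℝ) - 1) + 1) := by
  obtain ⟨m, rfl⟩ : ∃ m, M = m + 1 := ⟨M - 1, by omega⟩
  have hm : 2 ≤ m := by omega
  set f : ℕ → ℝ := fun s => |Real.exp (r s) - 1| with hfdef
  have hf : ∀ s, 0 ≤ f s := fun s => abs_nonneg _
  obtain ⟨C, hC, hrowC⟩ := row_bound d K hd0 hd1 r hr
  obtain ⟨σ, hσbij, hσadj⟩ := exists_ordering G hconn (by omega)
  -- parent function on ℕ
  have hσadj' : ∀ t : ℕ, 1 ≤ t → t ≤ m →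
      ∃ p : ℕ, p < t ∧ G.Adj (σ ((t : ℕ) : Fin (m+1))) (σ ((p : ℕ) : Fin (m+1))) := by
    intro t h1 h2
    obtain ⟨s, hs, hadj⟩ := hσadj ((t : ℕ) : Fin (m+1))
      (by rw [Fin.val_cast_of_lt (by omega)]; omega)
    rw [Fin.val_cast_of_lt (by omega)] at hs
    refine ⟨(s : ℕ), hs, ?_⟩
    convert hadj using 2
    exact Fin.cast_val_eq_self s
  classical
  set par : ℕ → ℕ := fun t => if h : 1 ≤ t ∧ t ≤ m then (hσadj' t h.1 h.2).choose else 0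
    with hpardef
  have hpar : ∀ t, 1 ≤ t → t ≤ m → par t < t := by
    intro t h1 h2
    rw [hpardef]
    simp only [dif_pos (show 1 ≤ t ∧ t ≤ m from ⟨h1, h2⟩)]
    exact (hσadj' t h1 h2).choose_spec.1
  have hadj : ∀ t, 1 ≤ t → t ≤ m →
      G.Adj (σ ((t : ℕ) : Fin (m+1))) (σ ((par t : ℕ) : Fin (m+1))) := by
    intro t h1 h2
    rw [hpardef]
    simp only [dif_pos (show 1 ≤ t ∧ t ≤ m from ⟨h1, h2⟩)]
    exact (hσadj' t h1 h2).choose_spec.2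
  refine ⟨C ^ m, pow_pos hC m, ?_⟩
  intro n hn
  -- step 1: rewrite the edge product
  have hprod : ∀ k : Fin (m+1) → ℕ,
      (∏ e ∈ G.edgeFinset,
        Sym2.lift
          ⟨fun i j => |Real.exp (r (((k i : ℤ) - (k j : ℤ)).natAbs)) - 1|,
            fun i j => by dsimp only; rw [show ((k i : ℤ) - (k j : ℤ)).natAbs = ((k j : ℤ) - (k i : ℤ)).natAbs from by rw [← Int.natAbs_neg]; ring_nf]⟩ e)
      = ∏ t ∈ Finset.range m,
          f (((k (σ ((t+1 : ℕ) : Fin (m+1))) : ℤ) - (k (σ ((par (t+1) : ℕ) : Fin (m+1))) : ℤ)).natAbs) := by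
    intro k
    have hinj : ∀ t ∈ Finset.range m, ∀ t' ∈ Finset.range m,
        s(σ ((t+1 : ℕ) : Fin (m+1)), σ ((par (t+1) : ℕ) : Fin (m+1)))
        = s(σ ((t'+1 : ℕ) : Fin (m+1)), σ ((par (t'+1) : ℕ) : Fin (m+1))) → t = t' := by
      intro t ht t' ht' heq
      rw [Finset.mem_range] at ht ht'
      rw [Sym2.eq_iff] at heq
      have hp1 : par (t+1) < t+1 := hpar (t+1) (by omega) (by omega)
      have hp2 : par (t'+1) < t'+1 := hpar (t'+1) (by omega) (by omega)
      rcases heq with ⟨h1, h2⟩ | ⟨h1, h2⟩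
      · have e1 := hσbij.1 h1
        have := congrArg Fin.val e1
        rw [Fin.val_cast_of_lt (by omega), Fin.val_cast_of_lt (by omega)] at this
        omega
      · have e1 := hσbij.1 h1
        have e2 := hσbij.1 h2
        have c1 := congrArg Fin.val e1
        have c2 := congrArg Fin.val e2
        rw [Fin.val_cast_of_lt (by omega), Fin.val_cast_of_lt (by omega)] at c1
        rw [Fin.val_cast_of_lt (by omega), Fin.val_cast_of_lt (by omega)] at c2
        omega
    have hmem : ∀ t ∈ Finset.range m,
        s(σ ((t+1 : ℕ) : Fin (m+1)), σ ((par (t+1) : ℕ) : Fin (m+1))) ∈ G.edgeFinset := by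
      intro t ht
      rw [Finset.mem_range] at ht
      rw [SimpleGraph.mem_edgeFinset, SimpleGraph.mem_edgeSet]
      exact hadj (t+1) (by omega) (by omega)
    have hsurj : ∀ e ∈ G.edgeFinset, ∃ t, ∃ ht : t ∈ Finset.range m,
        s(σ ((t+1 : ℕ) : Fin (m+1)), σ ((par (t+1) : ℕ) : Fin (m+1))) = e := by
    -- via cardinality
      have himg : (Finset.range m).image
          (fun t => s(σ ((t+1 : ℕ) : Fin (m+1)), σ ((par (t+1) : ℕ) : Fin (m+1))))
          = G.edgeFinset := by
        apply Finset.eq_of_subset_of_card_le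
        · intro e he
          rw [Finset.mem_image] at he
          obtain ⟨t, ht, rfl⟩ := he
          exact hmem t ht
        · rw [hcard]
          have : ((Finset.range m).image
              (fun t => s(σ ((t+1 : ℕ) : Fin (m+1)), σ ((par (t+1) : ℕ) : Fin (m+1))))).card
              = m := by
            rw [Finset.card_image_of_injOn, Finset.card_range]
            intro a ha b hb hab
            exact hinj a ha b hb hab
          omega
      intro e he
      rw [← himg, Finset.mem_image] at he
      obtain ⟨t, ht, hte⟩ := he
      exact ⟨t, ht, hte⟩
    refine (Finset.prod_bij
      (fun t _ => s(σ ((t+1 : ℕ) : Fin (m+1)), σ ((par (t+1) : ℕ) : Fin (m+1))))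
      hmem (fun a ha b hb => hinj a ha b hb) hsurj ?_).symm
    intro t ht
    rw [Sym2.lift_mk]
  -- step 2: reindex the sum
  have hsum : ∑ k ∈ Fintype.piFinset (fun _ : Fin (m+1) => Finset.Icc 1 n),
      ∏ t ∈ Finset.range m,
        f (((k (σ ((t+1 : ℕ) : Fin (m+1))) : ℤ) - (k (σ ((par (t+1) : ℕ) : Fin (m+1))) : ℤ)).natAbs)
      = ∑ a ∈ Fintype.piFinset (fun _ : Fin (m+1) => Finset.Icc 1 n),
      ∏ t ∈ Finset.range m,
        f (((a ((t+1 : ℕ) : Fin (m+1)) : ℤ) - (a ((par (t+1) : ℕ) : Fin (m+1)) : ℤ)).natAbs) := by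
    set e : Fin (m+1) ≃ Fin (m+1) := Equiv.ofBijective σ hσbij with hedef
    apply Finset.sum_nbij' (i := fun k => k ∘ σ) (j := fun a => a ∘ e.symm)
    · intro k hk
      rw [Fintype.mem_piFinset] at hk ⊢
      intro i; exact hk _
    · intro a ha
      rw [Fintype.mem_piFinset] at ha ⊢
      intro i; exact ha _
    · intro k hk
      funext x
      show k (σ (e.symm x)) = k x
      congr 1
      exact e.apply_symm_apply x
    · intro a ha
      funext x
      show a (e.symm (σ x)) = a x
      congr 1
      exact e.symm_apply_apply x
    · intro k hk
      rfl
  calc ∑ k ∈ Fintype.piFinset (fun _ : Fin (m+1) => Finset.Icc 1 n),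
        ∏ e ∈ G.edgeFinset,
          Sym2.lift
            ⟨fun i j => |Real.exp (r (((k i : ℤ) - (k j : ℤ)).natAbs)) - 1|,
              fun i j => by dsimp only; rw [show ((k i : ℤ) - (k j : ℤ)).natAbs = ((k j : ℤ) - (k i : ℤ)).natAbs from by rw [← Int.natAbs_neg]; ring_nf]⟩ e
      = ∑ a ∈ Fintype.piFinset (fun _ : Fin (m+1) => Finset.Icc 1 n),
        ∏ t ∈ Finset.range m,
          f (((a ((t+1 : ℕ) : Fin (m+1)) : ℤ) - (a ((par (t+1) : ℕ) : Fin (m+1)) : ℤ)).natAbs) := by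
        rw [← hsum]
        exact Finset.sum_congr rfl fun k _ => hprod k
    _ ≤ (n : ℝ) * (C * (n:ℝ) ^ (2*d)) ^ m :=
        pi_sum_bound f hf n hn (C * (n:ℝ) ^ (2*d)) (hrowC n hn) m par hpar
    _ = C ^ m * (n : ℝ) ^ (2*d*(((m+1 : ℕ) : ℝ) - 1) + 1) := by
        have hn0 : (0:ℝ) < (n:ℝ) := by exact_mod_cast hn
        have h1 : (((n:ℝ) ^ (2*d)) ^ m) = (n:ℝ) ^ (2*d*(m:ℝ)) := by
          rw [← Real.rpow_natCast ((n:ℝ) ^ (2*d)) m, ← Real.rpow_mul hn0.le]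
        have h2 : (((m+1 : ℕ) : ℝ) - 1) = (m:ℝ) := by push_cast; ring
        rw [mul_pow, h1, h2, Real.rpow_add hn0, Real.rpow_one]
        ring
end

section
/- Let d ∈ (0, 1/2) and let r : ℕ → ℝ satisfy r_s · s^{1−2d} → K as s → ∞ for some constant K > 0. Then there exists a constant C > 0 such that for all n ≥ 1 and all integers i with 1 ≤ i ≤ n, ∑_{j=1}^{n} |exp(r_{|i−j|}) − 1| ≤ C · n^{2d}. -/
open Filter

/-- `|e^x - 1| ≤ e^M * |x|` whenever `|x| ≤ M`. -/
lemma abs_exp_sub_one_le_aux {x M : ℝ} (h : |x| ≤ M) :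
    |Real.exp x - 1| ≤ Real.exp M * |x| := by
  have hM : 0 ≤ M := le_trans (abs_nonneg x) h
  rcases le_or_gt 0 x with hx | hx
  · have h1 : (-x) + 1 ≤ Real.exp (-x) := Real.add_one_le_exp _
    have h2 : Real.exp (-x) * Real.exp x = 1 := by
      rw [← Real.exp_add]; simp
    have hex : (0:ℝ) < Real.exp x := Real.exp_pos x
    have key : Real.exp x - 1 ≤ x * Real.exp x := by nlinarith
    have hxM : Real.exp x ≤ Real.exp M := Real.exp_le_exp.2 (by rw [abs_of_nonneg hx] at h; exact h)
    rw [abs_of_nonneg hx]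
    rw [abs_of_nonneg (by linarith [Real.add_one_le_exp x] : (0:ℝ) ≤ Real.exp x - 1)]
    calc Real.exp x - 1 ≤ x * Real.exp x := key
      _ ≤ Real.exp M * x := by nlinarith
  · have h1 : x + 1 ≤ Real.exp x := Real.add_one_le_exp x
    have hlt : Real.exp x < 1 := by
      rw [← Real.exp_zero]; exact Real.exp_lt_exp.2 hx
    rw [abs_of_neg hx, abs_of_nonpos (by linarith : Real.exp x - 1 ≤ 0)]
    have hM1 : (1:ℝ) ≤ Real.exp M := by
      rw [← Real.exp_zero]; exact Real.exp_le_exp.2 hM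
    nlinarith

/-- Sum of `s^(p-1)` is at most `m^p / p` for `0 < p ≤ 1`. -/
lemma sum_rpow_aux {p : ℝ} (hp0 : 0 < p) (hp1 : p ≤ 1) :
    ∀ m : ℕ, ∑ s ∈ Finset.Icc 1 m, (s : ℝ) ^ (p - 1) ≤ (m : ℝ) ^ p / p := by
  intro m
  induction m with
  | zero => simp [Real.zero_rpow (ne_of_gt hp0)]
  | succ m ih =>
    rw [Finset.sum_Icc_succ_top (by omega : 1 ≤ m + 1)]
    have hb : (0:ℝ) < (m:ℝ) + 1 := by positivity
    -- key: p * (m+1)^(p-1) + m^p ≤ (m+1)^p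
    have key : p * ((m:ℝ)+1) ^ (p-1) + (m:ℝ) ^ p ≤ ((m:ℝ)+1) ^ p := by
      have hs : (-1:ℝ) ≤ -(1/((m:ℝ)+1)) := by
        rw [neg_le_neg_iff]
        rw [div_le_one hb]; linarith
      have hber := rpow_one_add_le_one_add_mul_self hs (le_of_lt hp0) hp1
      have h1m : (1 : ℝ) + -(1/((m:ℝ)+1)) = (m:ℝ)/((m:ℝ)+1) := by
        field_simp
        ring
      rw [h1m] at hber
      have hmul : ((m:ℝ)/((m:ℝ)+1)) ^ p * ((m:ℝ)+1) ^ p = (m:ℝ) ^ p := by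
        rw [← Real.mul_rpow (by positivity) (le_of_lt hb)]
        rw [div_mul_cancel₀]
        exact ne_of_gt hb
      have hpos : (0:ℝ) < ((m:ℝ)+1) ^ p := Real.rpow_pos_of_pos hb p
      have h2 : (m:ℝ) ^ p ≤ (1 + p * -(1/((m:ℝ)+1))) * ((m:ℝ)+1) ^ p := by
        rw [← hmul]
        exact mul_le_mul_of_nonneg_right hber (le_of_lt hpos)
      have h3 : ((m:ℝ)+1) ^ (p-1) = ((m:ℝ)+1) ^ p / ((m:ℝ)+1) := by
        rw [Real.rpow_sub hb, Real.rpow_one]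
      rw [h3]
      have : (1 + p * -(1/((m:ℝ)+1))) * ((m:ℝ)+1) ^ p
          = ((m:ℝ)+1) ^ p - p * (((m:ℝ)+1) ^ p / ((m:ℝ)+1)) := by
        field_simp; ring
      rw [this] at h2
      linarith
    have hcast : ((m+1 : ℕ) : ℝ) = (m:ℝ) + 1 := by push_cast; ring
    rw [hcast]
    have ihm : ∑ s ∈ Finset.Icc 1 m, (s : ℝ) ^ (p - 1) ≤ (m : ℝ) ^ p / p := ih
    rw [le_div_iff₀ hp0] at ihm ⊢
    calc (∑ s ∈ Finset.Icc 1 m, (s : ℝ) ^ (p - 1) + ((m:ℝ)+1) ^ (p-1)) * p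
        = (∑ s ∈ Finset.Icc 1 m, (s : ℝ) ^ (p - 1)) * p + p * ((m:ℝ)+1)^(p-1) := by ring
      _ ≤ (m:ℝ)^p + p * ((m:ℝ)+1)^(p-1) := by linarith
      _ ≤ ((m:ℝ)+1)^p := by linarith

/-- Reindexing: a sum of `F |i - j|` over `j ∈ [1,n]` is at most twice the sum over `[0,n)`. -/
lemma reindex_aux (F : ℕ → ℝ) (hF : ∀ s, 0 ≤ F s) (n i : ℕ) (hi1 : 1 ≤ i) (hin : i ≤ n) :
    ∑ j ∈ Finset.Icc 1 n, F (((i : ℤ) - (j : ℤ)).natAbs)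
      ≤ 2 * ∑ s ∈ Finset.range n, F s := by
  have hsplit : Finset.Icc 1 n = Finset.Icc 1 i ∪ Finset.Icc (i+1) n := by
    ext x; simp only [Finset.mem_Icc, Finset.mem_union]; omega
  have hdisj : Disjoint (Finset.Icc 1 i) (Finset.Icc (i+1) n) := by
    rw [Finset.disjoint_left]; intro a ha hb
    simp only [Finset.mem_Icc] at ha hb; omega
  rw [hsplit, Finset.sum_union hdisj]
  have e1 : ∑ j ∈ Finset.Icc 1 i, F (((i : ℤ) - (j : ℤ)).natAbs)
      = ∑ s ∈ Finset.range i, F s := by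
    apply Finset.sum_nbij' (fun j => i - j) (fun s => i - s)
    · intro a ha; simp only [Finset.mem_Icc] at ha; simp only [Finset.mem_range]; omega
    · intro a ha; simp only [Finset.mem_range] at ha; simp only [Finset.mem_Icc]; omega
    · intro a ha; simp only [Finset.mem_Icc] at ha; omega
    · intro a ha; simp only [Finset.mem_range] at ha; omega
    · intro a ha; simp only [Finset.mem_Icc] at ha
      congr 1; omega
  have e2 : ∑ j ∈ Finset.Icc (i+1) n, F (((i : ℤ) - (j : ℤ)).natAbs)
      = ∑ s ∈ Finset.Icc 1 (n - i), F s := by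
    apply Finset.sum_nbij' (fun j => j - i) (fun s => s + i)
    · intro a ha; simp only [Finset.mem_Icc] at ha ⊢; omega
    · intro a ha; simp only [Finset.mem_Icc] at ha ⊢; omega
    · intro a ha; simp only [Finset.mem_Icc] at ha; omega
    · intro a ha; simp only [Finset.mem_Icc] at ha; omega
    · intro a ha; simp only [Finset.mem_Icc] at ha
      congr 1; omega
  rw [e1, e2]
  have h1 : ∑ s ∈ Finset.range i, F s ≤ ∑ s ∈ Finset.range n, F s := by
    apply Finset.sum_le_sum_of_subset_of_nonneg
    · exact Finset.range_subset_range.2 hin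
    · intro s _ _; exact hF s
  have h2 : ∑ s ∈ Finset.Icc 1 (n - i), F s ≤ ∑ s ∈ Finset.range n, F s := by
    apply Finset.sum_le_sum_of_subset_of_nonneg
    · intro x hx; simp only [Finset.mem_Icc] at hx; simp only [Finset.mem_range]; omega
    · intro s _ _; exact hF s
  linarith

/-- Single-index sum bound: `∑_{j=1}^n |e^{r_{|i-j|}} - 1| = O(n^{2d})`, uniformly in `1 ≤ i ≤ n`. -/
theorem single_sum_bound
    (d K : ℝ) (hd0 : 0 < d) (hd1 : d < 1/2) (hK : 0 < K)
    (r : ℕ → ℝ)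
    (hr : Tendsto (fun s : ℕ => r s * (s : ℝ) ^ (1 - 2*d)) atTop (nhds K)) :
    ∃ C > 0, ∀ n : ℕ, 1 ≤ n → ∀ i : ℕ, 1 ≤ i → i ≤ n →
      ∑ j ∈ Finset.Icc 1 n, |Real.exp (r (((i : ℤ) - (j : ℤ)).natAbs)) - 1|
        ≤ C * (n : ℝ) ^ (2*d) := by
  -- From `hr`, get N with `|r s * s^(1-2d) - K| ≤ 1` for `s ≥ N`.
  have hmet := Metric.tendsto_atTop.1 hr 1 one_pos
  obtain ⟨N0, hN0⟩ := hmet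
  set N : ℕ := max N0 1 with hN
  have hNr : ∀ s : ℕ, N ≤ s → |r s| ≤ (K + 1) * (s : ℝ) ^ (2*d - 1) := by
    intro s hs
    have hs1 : 1 ≤ s := le_trans (le_max_right N0 1) hs
    have hs0 : (0:ℝ) < (s:ℝ) := by exact_mod_cast hs1
    have h := hN0 s (le_trans (le_max_left N0 1) hs)
    rw [Real.dist_eq] at h
    have hb : |r s * (s:ℝ) ^ (1 - 2*d)| ≤ K + 1 := by
      have := abs_sub_abs_le_abs_sub (r s * (s:ℝ) ^ (1 - 2*d)) K
      rw [abs_of_pos hK] at this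
      linarith
    have hpow : (0:ℝ) < (s:ℝ) ^ (1 - 2*d) := Real.rpow_pos_of_pos hs0 _
    rw [abs_mul, abs_of_pos hpow] at hb
    have key : |r s| ≤ (K + 1) / (s:ℝ) ^ (1 - 2*d) := by
      rw [le_div_iff₀ hpow]; exact hb
    have hpowinv : (s:ℝ) ^ (2*d - 1) = ((s:ℝ) ^ (1 - 2*d))⁻¹ := by
      rw [show (2*d-1 : ℝ) = -(1-2*d) by ring, Real.rpow_neg hs0.le]
    rw [hpowinv, ← div_eq_mul_inv]
    exact key
  -- A uniform bound on |r s|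
  set SA : ℝ := ∑ s ∈ Finset.range N, |r s| with hSA
  have hSA0 : 0 ≤ SA := Finset.sum_nonneg fun s _ => abs_nonneg _
  set M : ℝ := (K + 1) + SA with hM
  have hMr : ∀ s : ℕ, |r s| ≤ M := by
    intro s
    rcases le_or_gt N s with hs | hs
    · have h1 := hNr s hs
      have hs1 : 1 ≤ s := le_trans (le_max_right N0 1) hs
      have hs0 : (1:ℝ) ≤ (s:ℝ) := by exact_mod_cast hs1
      have hpow1 : (s:ℝ) ^ (2*d - 1) ≤ 1 :=
        Real.rpow_le_one_of_one_le_of_nonpos hs0 (by linarith)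
      have : (K + 1) * (s : ℝ) ^ (2*d - 1) ≤ K + 1 := by
        nlinarith [Real.rpow_nonneg (le_trans zero_le_one hs0) (2*d-1)]
      linarith
    · have h1 : |r s| ≤ SA := by
        apply Finset.single_le_sum (f := fun s => |r s|) (fun t _ => abs_nonneg _)
        exact Finset.mem_range.2 hs
      linarith
  -- Bound on sums of F s := |exp (r s) - 1| over range n
  have hF0 : ∀ s : ℕ, (0:ℝ) ≤ |Real.exp (r s) - 1| := fun s => abs_nonneg _
  have hFle : ∀ s : ℕ, |Real.exp (r s) - 1| ≤ Real.exp M * |r s| :=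
    fun s => abs_exp_sub_one_le_aux (hMr s)
  have h2d0 : (0:ℝ) < 2*d := by linarith
  have h2d1 : 2*d ≤ 1 := by linarith
  have hsum : ∀ n : ℕ, 1 ≤ n →
      ∑ s ∈ Finset.range n, |Real.exp (r s) - 1|
        ≤ Real.exp M * (SA + (K+1)/(2*d)) * (n:ℝ) ^ (2*d) := by
    intro n hn
    have hn0 : (0:ℝ) < (n:ℝ) := by exact_mod_cast hn
    have hrsum : ∑ s ∈ Finset.range n, |r s| ≤ SA + (K+1) * ((n:ℝ) ^ (2*d) / (2*d)) := by
      rw [← Finset.sum_filter_add_sum_filter_not (Finset.range n) (fun s => s < N)]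
      have hA : ∑ s ∈ (Finset.range n).filter (fun s => s < N), |r s| ≤ SA := by
        apply Finset.sum_le_sum_of_subset_of_nonneg
        · intro x hx
          simp only [Finset.mem_filter, Finset.mem_range] at hx ⊢; omega
        · intro s _ _; exact abs_nonneg _
      have hB : ∑ s ∈ (Finset.range n).filter (fun s => ¬ s < N), |r s|
          ≤ (K+1) * ((n:ℝ) ^ (2*d) / (2*d)) := by
        have step1 : ∑ s ∈ (Finset.range n).filter (fun s => ¬ s < N), |r s|
            ≤ ∑ s ∈ (Finset.range n).filter (fun s => ¬ s < N),
                (K+1) * (s : ℝ) ^ (2*d - 1) := by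
          apply Finset.sum_le_sum
          intro s hs
          simp only [Finset.mem_filter, Finset.mem_range, not_lt] at hs
          exact hNr s hs.2
        have step2 : ∑ s ∈ (Finset.range n).filter (fun s => ¬ s < N),
                (K+1) * (s : ℝ) ^ (2*d - 1)
            ≤ ∑ s ∈ Finset.Icc 1 (n-1), (K+1) * (s : ℝ) ^ (2*d - 1) := by
          apply Finset.sum_le_sum_of_subset_of_nonneg
          · intro x hx
            simp only [Finset.mem_filter, Finset.mem_range, not_lt] at hx
            simp only [Finset.mem_Icc]
            have hx1 : 1 ≤ x := le_trans (le_max_right N0 1) hx.2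
            omega
          · intro s _ _
            have : (0:ℝ) ≤ (s:ℝ) ^ (2*d-1) := Real.rpow_nonneg (Nat.cast_nonneg s) _
            nlinarith
        have step3 : ∑ s ∈ Finset.Icc 1 (n-1), (K+1) * (s : ℝ) ^ (2*d - 1)
            ≤ (K+1) * ((n:ℝ) ^ (2*d) / (2*d)) := by
          rw [← Finset.mul_sum]
          apply mul_le_mul_of_nonneg_left _ (by linarith : (0:ℝ) ≤ K + 1)
          have h1 := sum_rpow_aux h2d0 h2d1 (n-1)
          have hle : ((n-1 : ℕ) : ℝ) ^ (2*d) ≤ (n:ℝ) ^ (2*d) := by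
            apply Real.rpow_le_rpow (Nat.cast_nonneg _) _ (le_of_lt h2d0)
            exact_mod_cast Nat.sub_le n 1
          calc ∑ s ∈ Finset.Icc 1 (n-1), (s : ℝ) ^ (2*d - 1)
              ≤ ((n-1:ℕ):ℝ) ^ (2*d) / (2*d) := h1
            _ ≤ (n:ℝ) ^ (2*d) / (2*d) := by gcongr
        linarith [step1, step2, step3]
      linarith
    have hFsum : ∑ s ∈ Finset.range n, |Real.exp (r s) - 1|
        ≤ Real.exp M * ∑ s ∈ Finset.range n, |r s| := by
      rw [Finset.mul_sum]
      exact Finset.sum_le_sum fun s _ => hFle s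
    have hexp0 : (0:ℝ) < Real.exp M := Real.exp_pos M
    have hn2d : (1:ℝ) ≤ (n:ℝ) ^ (2*d) := by
      rw [show (1:ℝ) = (1:ℝ) ^ (2*d) by rw [Real.one_rpow]]
      apply Real.rpow_le_rpow zero_le_one (by exact_mod_cast hn) (le_of_lt h2d0)
    calc ∑ s ∈ Finset.range n, |Real.exp (r s) - 1|
        ≤ Real.exp M * (SA + (K+1) * ((n:ℝ) ^ (2*d) / (2*d))) := by
          refine le_trans hFsum ?_
          exact mul_le_mul_of_nonneg_left hrsum (le_of_lt hexp0)
      _ ≤ Real.exp M * (SA + (K+1)/(2*d)) * (n:ℝ) ^ (2*d) := by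
          have hKd : (0:ℝ) < (K+1)/(2*d) := by positivity
          have : SA + (K+1) * ((n:ℝ) ^ (2*d) / (2*d))
              = SA + ((K+1)/(2*d)) * (n:ℝ) ^ (2*d) := by ring
          rw [this]
          have hn2d0 : (0:ℝ) ≤ (n:ℝ) ^ (2*d) := by positivity
          nlinarith [mul_nonneg (mul_nonneg hexp0.le hSA0)
            (by linarith : (0:ℝ) ≤ (n:ℝ)^(2*d) - 1)]
  refine ⟨2 * Real.exp M * (SA + (K+1)/(2*d)), by positivity, ?_⟩
  intro n hn i hi1 hin
  have hre := reindex_aux (fun s => |Real.exp (r s) - 1|) hF0 n i hi1 hin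
  have hs := hsum n hn
  calc ∑ j ∈ Finset.Icc 1 n, |Real.exp (r (((i : ℤ) - (j : ℤ)).natAbs)) - 1|
      ≤ 2 * ∑ s ∈ Finset.range n, |Real.exp (r s) - 1| := hre
    _ ≤ 2 * (Real.exp M * (SA + (K+1)/(2*d)) * (n:ℝ) ^ (2*d)) := by linarith
    _ = 2 * Real.exp M * (SA + (K+1)/(2*d)) * (n:ℝ) ^ (2*d) := by ring
end

section
/- Let (Ω, F, P) be a probability space and let (ξ_s)_{s≥0} and (ζ_s)_{s≥0} be two sequences of real-valued random variables such that the σ-algebras σ(ξ_s : s ≥ 0) and σ(ζ_s : s ≥ 0) are independent. Suppose the future tail σ-field of (ξ_s), namely ⋂_{t≥0} σ(ξ_s : s ≥ t), is P-trivial, and likewise the future tail σ-field ⋂_{t≥0} σ(ζ_s : s ≥ t) of (ζ_s) is P-trivial. Then the future tail σ-field of the paired process, ⋂_{t≥0} σ((ξ_s, ζ_s) : s ≥ t), is P-trivial. -/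
open MeasureTheory ProbabilityTheory Filter Topology
open scoped ENNReal

section Aux

variable {Ω : Type*}

/-- A σ-algebra all of whose sets have probability `0` or `1` is independent of everything. -/
lemma indep_top_of_trivial {m0 : MeasurableSpace Ω} {μ : Measure Ω} [IsProbabilityMeasure μ]
    {mt : MeasurableSpace Ω} (hle : mt ≤ m0)
    (htriv : ∀ A : Set Ω, MeasurableSet[mt] A → μ A = 0 ∨ μ A = 1) :
    Indep mt m0 μ := by
  rw [Indep_iff]
  intro t1 t2 ht1 _
  rcases htriv t1 ht1 with h | h
  · have h0 : μ (t1 ∩ t2) = 0 :=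
      le_antisymm ((measure_mono Set.inter_subset_left).trans h.le) zero_le
    rw [h0, h, zero_mul]
  · have hc : μ t1ᶜ = 0 := by
      rw [prob_compl_eq_one_sub (hle _ ht1), h, tsub_self]
    have h1 : μ t2 ≤ μ (t1 ∩ t2) := by
      calc μ t2 ≤ μ ((t1 ∩ t2) ∪ t1ᶜ) := by
            refine measure_mono fun x hx => ?_
            by_cases hxt : x ∈ t1
            · exact Or.inl ⟨hxt, hx⟩
            · exact Or.inr hxt
        _ ≤ μ (t1 ∩ t2) + μ t1ᶜ := measure_union_le _ _
        _ = μ (t1 ∩ t2) := by rw [hc, add_zero]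
    have h2 : μ (t1 ∩ t2) = μ t2 := le_antisymm (measure_mono Set.inter_subset_right) h1
    rw [h2, h, one_mul]

lemma integral_ind {m0 : MeasurableSpace Ω} (μ : Measure Ω) [IsProbabilityMeasure μ]
    {s : Set Ω} (hs : MeasurableSet s) :
    ∫ x, s.indicator (fun _ => (1:ℝ)) x ∂μ = (μ s).toReal := by
  rw [integral_indicator hs, setIntegral_const, smul_eq_mul, mul_one]
  rfl

lemma setIntegral_ind {m0 : MeasurableSpace Ω} (μ : Measure Ω) [IsProbabilityMeasure μ]
    {s : Set Ω} (B : Set Ω) (hs : MeasurableSet s) :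
    ∫ x in B, s.indicator (fun _ => (1:ℝ)) x ∂μ = (μ (B ∩ s)).toReal := by
  rw [setIntegral_indicator hs, setIntegral_const, smul_eq_mul, mul_one]
  rfl

/-- Key lemma: if `D` belongs to `F n ⊔ mζ` for all `n`, where `F` is an antitone family of
sub-σ-algebras of `mξ`, `mξ ⊥ mζ`, and the tail `⨅ n, F n` is trivial, then `D` is independent
of every `B ∈ mξ`. -/
lemma key {m0 : MeasurableSpace Ω} (μ : Measure Ω) [IsProbabilityMeasure μ]
    (mξ mζ : MeasurableSpace Ω) (hmξ : mξ ≤ m0) (hmζ : mζ ≤ m0)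
    (F : ℕ → MeasurableSpace Ω) (hFle : ∀ n, F n ≤ mξ) (hFanti : Antitone F)
    (hindep : Indep mξ mζ μ)
    (htail : ∀ A : Set Ω, MeasurableSet[⨅ n, F n] A → μ A = 0 ∨ μ A = 1)
    (D : Set Ω) (hD : ∀ n, MeasurableSet[F n ⊔ mζ] D) :
    ∀ B, MeasurableSet[mξ] B → μ (D ∩ B) = μ D * μ B := by
  letI _inst : MeasurableSpace Ω := m0
  have hFm0 : ∀ n, F n ≤ m0 := fun n => (hFle n).trans hmξ
  have hsupm0 : ∀ n, F n ⊔ mζ ≤ m0 := fun n => sup_le (hFm0 n) hmζ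
  -- Step 1: for every `D'` in `F n ⊔ mζ`, the conditional expectations w.r.t. `mξ` and `F n`
  -- agree on sets of `mξ` (formulated via set integrals).
  have star : ∀ n (D' : Set Ω), MeasurableSet[F n ⊔ mζ] D' → ∀ B, MeasurableSet[mξ] B →
      ∫ x in B, (μ[D'.indicator (fun _ => (1:ℝ)) | F n]) x ∂μ
        = ∫ x in B, D'.indicator (fun _ => (1:ℝ)) x ∂μ := by
    intro n
    have hgen : (F n ⊔ mζ) = MeasurableSpace.generateFrom
        {s | ∃ u v, MeasurableSet[F n] u ∧ MeasurableSet[mζ] v ∧ s = u ∩ v} := by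
      refine le_antisymm (sup_le ?_ ?_) (MeasurableSpace.generateFrom_le ?_)
      · intro s hs
        exact MeasurableSpace.measurableSet_generateFrom
          ⟨s, Set.univ, hs, MeasurableSet.univ, (Set.inter_univ s).symm⟩
      · intro s hs
        exact MeasurableSpace.measurableSet_generateFrom
          ⟨Set.univ, s, MeasurableSet.univ, hs, (Set.univ_inter s).symm⟩
      · rintro s ⟨u, v, hu, hv, rfl⟩
        exact ((le_sup_left : F n ≤ F n ⊔ mζ) _ hu).inter ((le_sup_right : mζ ≤ F n ⊔ mζ) _ hv)
    have hpi : IsPiSystem {s : Set Ω | ∃ u v,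
        MeasurableSet[F n] u ∧ MeasurableSet[mζ] v ∧ s = u ∩ v} := by
      rintro s ⟨u1, v1, hu1, hv1, rfl⟩ t ⟨u2, v2, hu2, hv2, rfl⟩ -
      exact ⟨u1 ∩ u2, v1 ∩ v2, hu1.inter hu2, hv1.inter hv2, Set.inter_inter_inter_comm u1 v1 u2 v2⟩
    intro D' hD'
    refine MeasurableSpace.induction_on_inter
      (C := fun D' _ => ∀ B, MeasurableSet[mξ] B →
        ∫ x in B, (μ[D'.indicator (fun _ => (1:ℝ)) | F n]) x ∂μ
          = ∫ x in B, D'.indicator (fun _ => (1:ℝ)) x ∂μ)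
      (m := F n ⊔ mζ) hgen hpi ?_ ?_ ?_ ?_ D' hD'
    · -- empty set
      intro B hB
      have h0 : (∅ : Set Ω).indicator (fun _ => (1:ℝ)) = (0 : Ω → ℝ) := Set.indicator_empty _
      rw [h0, condExp_zero]
    · -- rectangles
      rintro t ⟨u, v, hu, hv, rfl⟩ B hB
      have hum0 : MeasurableSet[m0] u := hFm0 n _ hu
      have hvm0 : MeasurableSet[m0] v := hmζ _ hv
      have hBm0 : MeasurableSet[m0] B := hmξ _ hB
      have hIζF : Indep mζ (F n) μ := indep_of_indep_of_le_right hindep.symm (hFle n)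
      have hv_cond : μ[v.indicator (fun _ => (1:ℝ)) | F n] =ᵐ[μ] fun _ => (μ v).toReal := by
        have h := condExp_indep_eq hmζ (hFm0 n)
          (f := v.indicator fun _ => (1:ℝ)) (stronglyMeasurable_const.indicator hv) hIζF
        rwa [integral_ind μ hvm0] at h
      have huv : (u ∩ v).indicator (fun _ => (1:ℝ))
          = u.indicator (fun _ => (1:ℝ)) * v.indicator (fun _ => (1:ℝ)) := by
        funext x
        by_cases hxu : x ∈ u <;> by_cases hxv : x ∈ v <;>
          simp [Set.indicator_apply, hxu, hxv]
      have hg : Integrable (v.indicator fun _ => (1:ℝ)) μ := (integrable_const 1).indicator hvm0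
      have hfg : Integrable (u.indicator (fun _ => (1:ℝ)) * v.indicator fun _ => (1:ℝ)) μ := by
        rw [← huv]; exact (integrable_const 1).indicator (hum0.inter hvm0)
      have hmul : μ[(u ∩ v).indicator (fun _ => (1:ℝ)) | F n] =ᵐ[μ]
          fun x => u.indicator (fun _ => (1:ℝ)) x * (μ v).toReal := by
        rw [huv]
        refine (condExp_mul_of_stronglyMeasurable_left (stronglyMeasurable_const.indicator hu)
          hfg hg).trans ?_
        filter_upwards [hv_cond] with x hx
        simp only [Pi.mul_apply, hx]
      calc ∫ x in B, (μ[(u ∩ v).indicator (fun _ => (1:ℝ)) | F n]) x ∂μ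
          = ∫ x in B, u.indicator (fun _ => (1:ℝ)) x * (μ v).toReal ∂μ :=
            integral_congr_ae (ae_restrict_of_ae hmul)
        _ = (∫ x in B, u.indicator (fun _ => (1:ℝ)) x ∂μ) * (μ v).toReal := by
            rw [integral_mul_const]
        _ = (μ (B ∩ u)).toReal * (μ v).toReal := by rw [setIntegral_ind μ B hum0]
        _ = ((μ (B ∩ u)) * μ v).toReal := (ENNReal.toReal_mul).symm
        _ = (μ (B ∩ (u ∩ v))).toReal := by
            rw [← Set.inter_assoc]
            rw [Indep_iff] at hindep
            rw [hindep _ _ (hB.inter (hFle n _ hu)) hv]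
        _ = ∫ x in B, (u ∩ v).indicator (fun _ => (1:ℝ)) x ∂μ :=
            (setIntegral_ind μ B (hum0.inter hvm0)).symm
    · -- complements
      intro t ht hC B hB
      have htm0 : MeasurableSet[m0] t := hsupm0 n _ ht
      have hBm0 : MeasurableSet[m0] B := hmξ _ hB
      have hti : Integrable (t.indicator fun _ => (1:ℝ)) μ := (integrable_const 1).indicator htm0
      have hcompl : tᶜ.indicator (fun _ => (1:ℝ))
          = (fun _ => (1:ℝ)) - t.indicator (fun _ => (1:ℝ)) := by
        funext x
        by_cases hx : x ∈ t <;> simp [Set.indicator_apply, hx]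
      have h1 : μ[tᶜ.indicator (fun _ => (1:ℝ)) | F n] =ᵐ[μ]
          (fun _ => (1:ℝ)) - μ[t.indicator (fun _ => (1:ℝ)) | F n] := by
        rw [hcompl]
        refine (condExp_sub (integrable_const (1:ℝ)) hti (F n)).trans ?_
        have h2 : μ[(fun _ => (1:ℝ)) | F n] = fun _ => (1:ℝ) := condExp_const (hFm0 n) (1:ℝ)
        filter_upwards with x
        simp [h2]
      calc ∫ x in B, (μ[tᶜ.indicator (fun _ => (1:ℝ)) | F n]) x ∂μ
          = ∫ x in B, ((1:ℝ) - (μ[t.indicator (fun _ => (1:ℝ)) | F n]) x) ∂μ := by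
            refine integral_congr_ae (ae_restrict_of_ae ?_)
            filter_upwards [h1] with x hx
            simpa using hx
        _ = (∫ x in B, (1:ℝ) ∂μ) - ∫ x in B, (μ[t.indicator (fun _ => (1:ℝ)) | F n]) x ∂μ :=
            integral_sub (integrable_const 1).integrableOn integrable_condExp.integrableOn
        _ = (∫ x in B, (1:ℝ) ∂μ) - ∫ x in B, t.indicator (fun _ => (1:ℝ)) x ∂μ := by
            rw [hC B hB]
        _ = ∫ x in B, ((1:ℝ) - t.indicator (fun _ => (1:ℝ)) x) ∂μ :=
            (integral_sub (integrable_const 1).integrableOn hti.integrableOn).symm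
        _ = ∫ x in B, tᶜ.indicator (fun _ => (1:ℝ)) x ∂μ := by
            refine integral_congr_ae (ae_restrict_of_ae ?_)
            filter_upwards with x
            rw [hcompl]
            simp
    · -- countable disjoint unions
      intro g hgdis hgm hgC B hB
      have hBm0 : MeasurableSet[m0] B := hmξ _ hB
      have hgm0 : ∀ i, MeasurableSet[m0] (g i) := fun i => hsupm0 n _ (hgm i)
      have haccm0 : ∀ k, MeasurableSet[m0] (Set.accumulate g k) := fun k =>
        MeasurableSet.biUnion (Set.to_countable _) fun i _ => hgm0 i
      have hUm0 : MeasurableSet[m0] (⋃ i, g i) := MeasurableSet.iUnion hgm0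
      have hdisacc : ∀ k, Disjoint (Set.accumulate g k) (g (k+1)) := by
        intro k
        rw [Set.disjoint_left]
        intro x hx hx'
        rw [Set.mem_accumulate] at hx
        obtain ⟨y, hy, hxy⟩ := hx
        exact Set.disjoint_left.1 (hgdis (show y ≠ k+1 by omega)) hxy hx'
      have hacc_succ : ∀ k, Set.accumulate g (k+1) = Set.accumulate g k ∪ g (k+1) := by
        intro k
        ext x
        simp only [Set.mem_accumulate, Set.mem_union]
        constructor
        · rintro ⟨y, hy, hxy⟩
          rcases Nat.lt_or_ge y (k+1) with h | h
          · exact Or.inl ⟨y, by omega, hxy⟩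
          · have hyk : y = k+1 := by omega
            exact Or.inr (hyk ▸ hxy)
        · rintro (⟨y, hy, hxy⟩ | hx)
          · exact ⟨y, by omega, hxy⟩
          · exact ⟨k+1, le_rfl, hx⟩
      have hind_succ : ∀ k, (Set.accumulate g (k+1)).indicator (fun _ => (1:ℝ))
          = (Set.accumulate g k).indicator (fun _ => (1:ℝ))
            + (g (k+1)).indicator (fun _ => (1:ℝ)) := by
        intro k
        rw [hacc_succ k]
        exact Set.indicator_union_of_disjoint (hdisacc k) _
      have hacc : ∀ k, ∫ x in B, (μ[(Set.accumulate g k).indicator (fun _ => (1:ℝ)) | F n]) x ∂μ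
          = ∫ x in B, (Set.accumulate g k).indicator (fun _ => (1:ℝ)) x ∂μ := by
        intro k
        induction k with
        | zero =>
          have h0 : Set.accumulate g 0 = g 0 := by
            ext x; simp [Set.mem_accumulate, Nat.le_zero]
          rw [h0]; exact hgC 0 B hB
        | succ k ih =>
          have hiacc : Integrable ((Set.accumulate g k).indicator fun _ => (1:ℝ)) μ :=
            (integrable_const 1).indicator (haccm0 k)
          have hig : Integrable ((g (k+1)).indicator fun _ => (1:ℝ)) μ :=
            (integrable_const 1).indicator (hgm0 (k+1))
          calc ∫ x in B, (μ[(Set.accumulate g (k+1)).indicator (fun _ => (1:ℝ)) | F n]) x ∂μ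
              = ∫ x in B, ((μ[(Set.accumulate g k).indicator (fun _ => (1:ℝ)) | F n]) x
                  + (μ[(g (k+1)).indicator (fun _ => (1:ℝ)) | F n]) x) ∂μ := by
                refine integral_congr_ae (ae_restrict_of_ae ?_)
                rw [hind_succ k]
                filter_upwards [condExp_add (m := F n) hiacc hig] with x hx
                simpa using hx
            _ = (∫ x in B, (μ[(Set.accumulate g k).indicator (fun _ => (1:ℝ)) | F n]) x ∂μ)
                + ∫ x in B, (μ[(g (k+1)).indicator (fun _ => (1:ℝ)) | F n]) x ∂μ :=
                integral_add integrable_condExp.integrableOn integrable_condExp.integrableOn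
            _ = (∫ x in B, (Set.accumulate g k).indicator (fun _ => (1:ℝ)) x ∂μ)
                + ∫ x in B, (g (k+1)).indicator (fun _ => (1:ℝ)) x ∂μ := by
                rw [ih, hgC (k+1) B hB]
            _ = ∫ x in B, ((Set.accumulate g k).indicator (fun _ => (1:ℝ)) x
                + (g (k+1)).indicator (fun _ => (1:ℝ)) x) ∂μ :=
                (integral_add hiacc.integrableOn hig.integrableOn).symm
            _ = ∫ x in B, (Set.accumulate g (k+1)).indicator (fun _ => (1:ℝ)) x ∂μ := by
                rw [hind_succ k]
                simp only [Pi.add_apply]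
      have hmono : Monotone fun k => B ∩ Set.accumulate g k :=
        fun a b hab => Set.inter_subset_inter_right B (Set.monotone_accumulate hab)
      have hUeq : (⋃ k, B ∩ Set.accumulate g k) = B ∩ ⋃ i, g i := by
        rw [← Set.inter_iUnion, Set.iUnion_accumulate]
      have hR : Tendsto (fun k => ∫ x in B, (Set.accumulate g k).indicator (fun _ => (1:ℝ)) x ∂μ)
          atTop (𝓝 (∫ x in B, (⋃ i, g i).indicator (fun _ => (1:ℝ)) x ∂μ)) := by
        have h1 : ∀ k, ∫ x in B, (Set.accumulate g k).indicator (fun _ => (1:ℝ)) x ∂μ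
            = (μ (B ∩ Set.accumulate g k)).toReal := fun k => setIntegral_ind μ B (haccm0 k)
        have h2 : ∫ x in B, (⋃ i, g i).indicator (fun _ => (1:ℝ)) x ∂μ
            = (μ (B ∩ ⋃ i, g i)).toReal := setIntegral_ind μ B hUm0
        simp only [h1, h2]
        have h3 := tendsto_measure_iUnion_atTop (μ := μ) hmono
        rw [hUeq] at h3
        exact (ENNReal.tendsto_toReal (measure_ne_top μ _)).comp h3
      have hsub : ∀ k, Set.accumulate g k ⊆ ⋃ i, g i := fun k => Set.accumulate_subset_iUnion k
      have hdiffind : ∀ k, ((⋃ i, g i) \ Set.accumulate g k).indicator (fun _ => (1:ℝ))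
          = (⋃ i, g i).indicator (fun _ => (1:ℝ))
            - (Set.accumulate g k).indicator (fun _ => (1:ℝ)) := by
        intro k; funext x
        by_cases hx : x ∈ Set.accumulate g k
        · have hx' : x ∈ ⋃ i, g i := hsub k hx
          simp [Set.indicator_apply, hx, hx']
        · by_cases hx' : x ∈ ⋃ i, g i <;> simp [Set.indicator_apply, hx, hx']
      have hdk : ∀ k, ∫ x in B,
            (μ[((⋃ i, g i) \ Set.accumulate g k).indicator (fun _ => (1:ℝ)) | F n]) x ∂μ
          = (∫ x in B, (μ[(⋃ i, g i).indicator (fun _ => (1:ℝ)) | F n]) x ∂μ)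
            - ∫ x in B, (μ[(Set.accumulate g k).indicator (fun _ => (1:ℝ)) | F n]) x ∂μ := by
        intro k
        rw [← integral_sub integrable_condExp.integrableOn integrable_condExp.integrableOn]
        refine integral_congr_ae (ae_restrict_of_ae ?_)
        rw [hdiffind k]
        filter_upwards [condExp_sub (m := F n) ((integrable_const (1:ℝ)).indicator hUm0)
          ((integrable_const (1:ℝ)).indicator (haccm0 k))] with x hx
        simpa using hx
      have hnn : ∀ (s : Set Ω), (0:Ω→ℝ) ≤ᵐ[μ] μ[s.indicator (fun _ => (1:ℝ)) | F n] := fun s =>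
        condExp_nonneg (Filter.Eventually.of_forall fun x =>
          Set.indicator_nonneg (fun _ _ => zero_le_one) x)
      have hd0 : Tendsto (fun k => ∫ x in B,
          (μ[((⋃ i, g i) \ Set.accumulate g k).indicator (fun _ => (1:ℝ)) | F n]) x ∂μ)
          atTop (𝓝 0) := by
        have hub : ∀ k, ∫ x in B,
            (μ[((⋃ i, g i) \ Set.accumulate g k).indicator (fun _ => (1:ℝ)) | F n]) x ∂μ
            ≤ (μ ((⋃ i, g i) \ Set.accumulate g k)).toReal := by
          intro k
          calc ∫ x in B,
              (μ[((⋃ i, g i) \ Set.accumulate g k).indicator (fun _ => (1:ℝ)) | F n]) x ∂μ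
              ≤ ∫ x, (μ[((⋃ i, g i) \ Set.accumulate g k).indicator (fun _ => (1:ℝ)) | F n]) x ∂μ :=
                setIntegral_le_integral integrable_condExp (hnn _)
            _ = ∫ x, ((⋃ i, g i) \ Set.accumulate g k).indicator (fun _ => (1:ℝ)) x ∂μ :=
                integral_condExp (hFm0 n)
            _ = (μ ((⋃ i, g i) \ Set.accumulate g k)).toReal :=
                integral_ind μ (hUm0.diff (haccm0 k))
        have hlb : ∀ k, 0 ≤ ∫ x in B,
            (μ[((⋃ i, g i) \ Set.accumulate g k).indicator (fun _ => (1:ℝ)) | F n]) x ∂μ :=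
          fun k => integral_nonneg_of_ae (ae_restrict_of_ae (hnn _))
        have hanti : Antitone fun k => (⋃ i, g i) \ Set.accumulate g k := fun a b hab =>
          Set.diff_subset_diff_right (Set.monotone_accumulate hab)
        have hiInter : (⋂ k, (⋃ i, g i) \ Set.accumulate g k) = ∅ := by
          rw [← Set.diff_iUnion, Set.iUnion_accumulate, Set.diff_self]
        have hto : Tendsto (fun k => (μ ((⋃ i, g i) \ Set.accumulate g k)).toReal) atTop (𝓝 0) := by
          have h4 := tendsto_measure_iInter_atTop (μ := μ)
            (fun k => (hUm0.diff (haccm0 k)).nullMeasurableSet) hanti ⟨0, measure_ne_top μ _⟩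
          rw [hiInter, measure_empty] at h4
          have h5 := (ENNReal.tendsto_toReal (by simp : (0:ℝ≥0∞) ≠ ⊤)).comp h4
          exact h5
        exact squeeze_zero hlb hub hto
      have hL : Tendsto (fun k => ∫ x in B,
            (μ[(Set.accumulate g k).indicator (fun _ => (1:ℝ)) | F n]) x ∂μ)
          atTop (𝓝 (∫ x in B, (μ[(⋃ i, g i).indicator (fun _ => (1:ℝ)) | F n]) x ∂μ)) := by
        have heq : (fun k => ∫ x in B,
              (μ[(Set.accumulate g k).indicator (fun _ => (1:ℝ)) | F n]) x ∂μ)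
            = fun k => (∫ x in B, (μ[(⋃ i, g i).indicator (fun _ => (1:ℝ)) | F n]) x ∂μ)
              - ∫ x in B,
                (μ[((⋃ i, g i) \ Set.accumulate g k).indicator (fun _ => (1:ℝ)) | F n]) x ∂μ := by
          funext k
          rw [hdk k]
          ring
        rw [heq]
        simpa using (tendsto_const_nhds.sub hd0)
      have hL' : Tendsto (fun k => ∫ x in B,
            (μ[(Set.accumulate g k).indicator (fun _ => (1:ℝ)) | F n]) x ∂μ)
          atTop (𝓝 (∫ x in B, (⋃ i, g i).indicator (fun _ => (1:ℝ)) x ∂μ)) := by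
        have heq : (fun k => ∫ x in B,
              (μ[(Set.accumulate g k).indicator (fun _ => (1:ℝ)) | F n]) x ∂μ)
            = fun k => ∫ x in B, (Set.accumulate g k).indicator (fun _ => (1:ℝ)) x ∂μ :=
          funext fun k => hacc k
        rw [heq]
        exact hR
      exact tendsto_nhds_unique hL hL'
  -- Step 2: conditional expectations w.r.t. `mξ` and `F n` agree a.e.
  have hDm0 : MeasurableSet[m0] D := hsupm0 0 _ (hD 0)
  have hindD : Integrable (D.indicator fun _ => (1:ℝ)) μ := (integrable_const 1).indicator hDm0
  have hcond : ∀ n, μ[D.indicator (fun _ => (1:ℝ)) | F n]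
      =ᵐ[μ] μ[D.indicator (fun _ => (1:ℝ)) | mξ] := by
    intro n
    refine ae_eq_condExp_of_forall_setIntegral_eq hmξ hindD
      (fun s _ _ => integrable_condExp.integrableOn)
      (fun s hs _ => star n D (hD n) s hs)
      (stronglyMeasurable_condExp.mono (hFle n)).aestronglyMeasurable
  -- Step 3: a tail-measurable version of the conditional expectation
  set H : Ω → ℝ≥0∞ := fun ω =>
    limsup (fun k => ENNReal.ofReal ((μ[D.indicator (fun _ => (1:ℝ)) | F k]) ω)) atTop with hH
  have hHm : ∀ m : ℕ, Measurable[F m] H := by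
    intro m
    have heq : H = fun ω =>
        limsup (fun k => ENNReal.ofReal ((μ[D.indicator (fun _ => (1:ℝ)) | F (k + m)]) ω)) atTop := by
      funext ω
      exact (Filter.limsup_nat_add
        (fun k => ENNReal.ofReal ((μ[D.indicator (fun _ => (1:ℝ)) | F k]) ω)) m).symm
    rw [heq]
    refine Measurable.limsup fun k => ?_
    exact ENNReal.measurable_ofReal.comp
      ((stronglyMeasurable_condExp.mono (hFanti (Nat.le_add_left m k))).measurable)
  have hHtail : Measurable[⨅ k, F k] H := fun t ht =>
    MeasurableSpace.measurableSet_iInf.2 fun k => hHm k ht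
  set h' : Ω → ℝ := fun ω => (H ω).toReal with hh'
  have h'tail : Measurable[⨅ k, F k] h' := ENNReal.measurable_toReal.comp hHtail
  have hkh : μ[D.indicator (fun _ => (1:ℝ)) | mξ] =ᵐ[μ] h' := by
    have hae1 : ∀ᵐ ω ∂μ, ∀ k, (μ[D.indicator (fun _ => (1:ℝ)) | F k]) ω
        = (μ[D.indicator (fun _ => (1:ℝ)) | mξ]) ω := MeasureTheory.ae_all_iff.2 fun k => hcond k
    have hae2 : (0:Ω→ℝ) ≤ᵐ[μ] μ[D.indicator (fun _ => (1:ℝ)) | mξ] :=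
      condExp_nonneg (Filter.Eventually.of_forall fun x =>
        Set.indicator_nonneg (fun _ _ => zero_le_one) x)
    filter_upwards [hae1, hae2] with ω h1 h2
    have h3 : (fun k => ENNReal.ofReal ((μ[D.indicator (fun _ => (1:ℝ)) | F k]) ω))
        = fun _ => ENNReal.ofReal ((μ[D.indicator (fun _ => (1:ℝ)) | mξ]) ω) :=
      funext fun k => by rw [h1 k]
    simp only [hh', hH, h3, limsup_const]
    rw [ENNReal.toReal_ofReal h2]
  -- Step 4: conclude via independence of the trivial tail
  intro B hB
  have hBm0 : MeasurableSet[m0] B := hmξ _ hB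
  have hT_le : (⨅ k, F k) ≤ m0 := (iInf_le F 0).trans (hFm0 0)
  have hTindep : Indep (⨅ k, F k) m0 μ := indep_top_of_trivial hT_le htail
  have hIF : IndepFun h' (B.indicator fun _ => (1:ℝ)) μ := by
    rw [IndepFun_iff_Indep]
    exact indep_of_indep_of_le_right (indep_of_indep_of_le_left hTindep h'tail.comap_le)
      (Measurable.comap_le (measurable_const.indicator hBm0))
  have h'aesm : AEStronglyMeasurable h' μ :=
    (h'tail.mono hT_le le_rfl).aestronglyMeasurable
  have hBind : AEStronglyMeasurable (B.indicator fun _ => (1:ℝ)) μ :=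
    (measurable_const.indicator hBm0).aestronglyMeasurable
  have e4 := hIF.integral_mul_eq_mul_integral h'aesm hBind
  have e5 : ∫ x, h' x ∂μ = (μ D).toReal := by
    rw [← integral_congr_ae hkh, integral_condExp hmξ, integral_ind μ hDm0]
  have e6 : ∫ x, B.indicator (fun _ => (1:ℝ)) x ∂μ = (μ B).toReal := integral_ind μ hBm0
  have efin : (μ (D ∩ B)).toReal = (μ D).toReal * (μ B).toReal := by
    calc (μ (D ∩ B)).toReal = (μ (B ∩ D)).toReal := by rw [Set.inter_comm]
      _ = ∫ x in B, D.indicator (fun _ => (1:ℝ)) x ∂μ := (setIntegral_ind μ B hDm0).symm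
      _ = ∫ x in B, (μ[D.indicator (fun _ => (1:ℝ)) | mξ]) x ∂μ :=
          (setIntegral_condExp hmξ hindD hB).symm
      _ = ∫ x in B, h' x ∂μ := integral_congr_ae (ae_restrict_of_ae hkh)
      _ = ∫ x, (h' * B.indicator (fun _ => (1:ℝ))) x ∂μ := by
          rw [← integral_indicator hBm0]
          refine integral_congr_ae (Filter.Eventually.of_forall fun x => ?_)
          by_cases hx : x ∈ B <;> simp [Set.indicator_apply, hx]
      _ = (∫ x, h' x ∂μ) * ∫ x, B.indicator (fun _ => (1:ℝ)) x ∂μ := e4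
      _ = (μ D).toReal * (μ B).toReal := by rw [e5, e6]
  have hfin : (μ (D ∩ B)).toReal = (μ D * μ B).toReal := by rw [efin, ENNReal.toReal_mul]
  exact (ENNReal.toReal_eq_toReal_iff' (measure_ne_top μ _)
    (ENNReal.mul_ne_top (measure_ne_top μ D) (measure_ne_top μ B))).1 hfin

end Aux

open MeasureTheory ProbabilityTheory

/-- If two independent processes each have a `P`-trivial future tail σ-field, then the paired
process has a `P`-trivial future tail σ-field. -/
theorem tail_trivial_of_indep_pair
    {Ω : Type*} [MeasurableSpace Ω] (μ : Measure Ω) [IsProbabilityMeasure μ]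
    (ξ ζ : ℕ → Ω → ℝ)
    (hmξ : ∀ s, Measurable (ξ s)) (hmζ : ∀ s, Measurable (ζ s))
    (hindep : Indep
      (⨆ s : ℕ, MeasurableSpace.comap (ξ s) inferInstance)
      (⨆ s : ℕ, MeasurableSpace.comap (ζ s) inferInstance) μ)
    (hξtail : ∀ A : Set Ω,
      MeasurableSet[⨅ t : ℕ, ⨆ s : ℕ, ⨆ _ : t ≤ s,
        MeasurableSpace.comap (ξ s) inferInstance] A → μ A = 0 ∨ μ A = 1)
    (hζtail : ∀ A : Set Ω,
      MeasurableSet[⨅ t : ℕ, ⨆ s : ℕ, ⨆ _ : t ≤ s,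
        MeasurableSpace.comap (ζ s) inferInstance] A → μ A = 0 ∨ μ A = 1) :
    ∀ A : Set Ω,
      MeasurableSet[⨅ t : ℕ, ⨆ s : ℕ, ⨆ _ : t ≤ s,
        MeasurableSpace.comap (fun ω => (ξ s ω, ζ s ω)) inferInstance] A →
      μ A = 0 ∨ μ A = 1 := by
  rename_i mΩ mprob
  intro A hA
  set mx : MeasurableSpace Ω := ⨆ s : ℕ, MeasurableSpace.comap (ξ s) inferInstance with hmx
  set mz : MeasurableSpace Ω := ⨆ s : ℕ, MeasurableSpace.comap (ζ s) inferInstance with hmz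
  set F : ℕ → MeasurableSpace Ω :=
    fun t => ⨆ s : ℕ, ⨆ _ : t ≤ s, MeasurableSpace.comap (ξ s) inferInstance with hF
  set G : ℕ → MeasurableSpace Ω :=
    fun t => ⨆ s : ℕ, ⨆ _ : t ≤ s, MeasurableSpace.comap (ζ s) inferInstance with hG
  have hmx0 : mx ≤ mΩ := by
    simp only [hmx]
    exact iSup_le fun s => (hmξ s).comap_le
  have hmz0 : mz ≤ mΩ := by
    simp only [hmz]
    exact iSup_le fun s => (hmζ s).comap_le
  have hFle : ∀ n, F n ≤ mx := by
    intro n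
    simp only [hF, hmx]
    exact iSup₂_le fun s _ => le_iSup (fun s => MeasurableSpace.comap (ξ s) inferInstance) s
  have hGle : ∀ n, G n ≤ mz := by
    intro n
    simp only [hG, hmz]
    exact iSup₂_le fun s _ => le_iSup (fun s => MeasurableSpace.comap (ζ s) inferInstance) s
  have hFanti : Antitone F := by
    intro a b hab
    simp only [hF]
    exact iSup₂_le fun s hs =>
      le_iSup₂ (f := fun s (_ : a ≤ s) => MeasurableSpace.comap (ξ s) inferInstance) s
        (hab.trans hs)
  have hGanti : Antitone G := by
    intro a b hab
    simp only [hG]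
    exact iSup₂_le fun s hs =>
      le_iSup₂ (f := fun s (_ : a ≤ s) => MeasurableSpace.comap (ζ s) inferInstance) s
        (hab.trans hs)
  have hcomap : ∀ s : ℕ, MeasurableSpace.comap (fun ω => (ξ s ω, ζ s ω)) inferInstance =
      MeasurableSpace.comap (ξ s) inferInstance ⊔ MeasurableSpace.comap (ζ s) inferInstance := by
    intro s
    have h1 : (inferInstance : MeasurableSpace (ℝ × ℝ)) =
        MeasurableSpace.comap Prod.fst inferInstance ⊔
          MeasurableSpace.comap Prod.snd inferInstance := rfl
    rw [h1, MeasurableSpace.comap_sup, MeasurableSpace.comap_comp, MeasurableSpace.comap_comp]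
    rfl
  have hpair_eq : ∀ n : ℕ, (⨆ s : ℕ, ⨆ _ : n ≤ s,
      MeasurableSpace.comap (fun ω => (ξ s ω, ζ s ω)) inferInstance) = F n ⊔ G n := by
    intro n
    simp only [hF, hG]
    simp_rw [hcomap, iSup_sup_eq]
  have hAn : ∀ n : ℕ, MeasurableSet[F n ⊔ G n] A := by
    intro n
    have hle : (⨅ t : ℕ, ⨆ s : ℕ, ⨆ _ : t ≤ s,
        MeasurableSpace.comap (fun ω => (ξ s ω, ζ s ω)) inferInstance) ≤ F n ⊔ G n :=
      (iInf_le _ n).trans_eq (hpair_eq n)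
    exact hle _ hA
  have hxtail : ∀ A' : Set Ω, MeasurableSet[⨅ n, F n] A' → μ A' = 0 ∨ μ A' = 1 := by
    intro A' hA'
    exact hξtail A' (by simpa only [hF] using hA')
  have hztail : ∀ A' : Set Ω, MeasurableSet[⨅ n, G n] A' → μ A' = 0 ∨ μ A' = 1 := by
    intro A' hA'
    exact hζtail A' (by simpa only [hG] using hA')
  have key1 : ∀ C, MeasurableSet[mz] C → μ (A ∩ C) = μ A * μ C := by
    intro C hC
    refine key μ mz mx hmz0 hmx0 G hGle hGanti hindep.symm hztail A ?_ C hC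
    intro n
    exact (sup_le ((hFle n).trans le_sup_right) le_sup_left) _ (hAn n)
  have key2 : ∀ C, MeasurableSet[mz] C → ∀ B, MeasurableSet[mx] B →
      μ (A ∩ C ∩ B) = μ A * μ C * μ B := by
    intro C hC B hB
    have hACn : ∀ n, MeasurableSet[F n ⊔ mz] (A ∩ C) := by
      intro n
      have hA' : MeasurableSet[F n ⊔ mz] A :=
        (sup_le le_sup_left ((hGle n).trans le_sup_right)) _ (hAn n)
      exact hA'.inter ((le_sup_right : mz ≤ F n ⊔ mz) _ hC)
    have h := key μ mx mz hmx0 hmz0 F hFle hFanti hindep hxtail (A ∩ C) hACn B hB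
    rw [h, key1 C hC]
  have hAm0 : MeasurableSet[mΩ] A :=
    (sup_le ((hFle 0).trans hmx0) ((hGle 0).trans hmz0)) _ (hAn 0)
  have hgen2 : mx ⊔ mz = MeasurableSpace.generateFrom
      {s : Set Ω | ∃ u v, MeasurableSet[mx] u ∧ MeasurableSet[mz] v ∧ s = u ∩ v} := by
    refine le_antisymm (sup_le ?_ ?_) (MeasurableSpace.generateFrom_le ?_)
    · intro s hs
      exact MeasurableSpace.measurableSet_generateFrom
        ⟨s, Set.univ, hs, MeasurableSet.univ, (Set.inter_univ s).symm⟩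
    · intro s hs
      exact MeasurableSpace.measurableSet_generateFrom
        ⟨Set.univ, s, MeasurableSet.univ, hs, (Set.univ_inter s).symm⟩
    · rintro s ⟨u, v, hu, hv, rfl⟩
      exact ((le_sup_left : mx ≤ mx ⊔ mz) _ hu).inter ((le_sup_right : mz ≤ mx ⊔ mz) _ hv)
  have hpi2 : IsPiSystem {s : Set Ω | ∃ u v,
      MeasurableSet[mx] u ∧ MeasurableSet[mz] v ∧ s = u ∩ v} := by
    rintro s ⟨u1, v1, hu1, hv1, rfl⟩ t ⟨u2, v2, hu2, hv2, rfl⟩ -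
    exact ⟨u1 ∩ u2, v1 ∩ v2, hu1.inter hu2, hv1.inter hv2,
      Set.inter_inter_inter_comm u1 v1 u2 v2⟩
  have hyp : IndepSets {A} {s : Set Ω | ∃ u v,
      MeasurableSet[mx] u ∧ MeasurableSet[mz] v ∧ s = u ∩ v} μ := by
    rw [IndepSets_iff]
    intro t1 t2 ht1 ht2
    rw [Set.mem_singleton_iff] at ht1
    subst ht1
    obtain ⟨u, v, hu, hv, rfl⟩ := ht2
    have h1 : t1 ∩ (u ∩ v) = t1 ∩ v ∩ u := by
      rw [Set.inter_comm u v, ← Set.inter_assoc]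
    have hI := hindep
    rw [Indep_iff] at hI
    rw [h1, key2 v hv u hu, hI u v hu hv]
    ring
  have hsingle : MeasurableSpace.generateFrom {A} ≤ mΩ :=
    MeasurableSpace.generateFrom_le fun s hs => by
      rw [Set.mem_singleton_iff] at hs
      exact hs ▸ hAm0
  have hindep2 : Indep (MeasurableSpace.generateFrom {A}) (mx ⊔ mz) μ :=
    IndepSets.indep hsingle (sup_le hmx0 hmz0) (IsPiSystem.singleton A) hpi2 rfl hgen2 hyp
  have hAA := (Indep_iff _ _ μ).1 hindep2 A A
    (MeasurableSpace.measurableSet_generateFrom (Set.mem_singleton_iff.mpr rfl))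
    ((sup_le ((hFle 0).trans le_sup_left) ((hGle 0).trans le_sup_right)) _ (hAn 0))
  rw [Set.inter_self] at hAA
  rcases eq_or_ne (μ A) 0 with h | h
  · exact Or.inl h
  · right
    have h2 : μ A * 1 = μ A * μ A := by
      rw [mul_one]
      exact hAA
    exact ((ENNReal.mul_right_inj h (measure_ne_top μ A)).1 h2).symm
end
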